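/- arXiv:1909.04554 — 11 statements merged into one kernel-verified Lean document; each statement's English description precedes it below -/
import Mathlib

section
/- For all v, d ∈ V with v ≠ d, exactly one of the seven non-empty cases of the routing function R1 applies, so R1(v, d) is a singleton; moreover R1(v, d) = ∅ if and only if v = d. Hence R1 is a total deterministic routing function on the 3D mesh topology digraph. -/
/-- Routers are triples `(x, y, z)` of natural numbers. -/
abbrev Vtx : Type := ℕ × ℕ × ℕ

/-- Membership in the vertex set `V` of the 3D mesh topology digraph with `L` layers,
`m z` rows and `n z` columns in layer `z`. -/
def memV (L : ℕ) (m n : ℕ → ℕ) (v : Vtx) : Prop :=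
  1 ≤ v.1 ∧ v.1 ≤ n v.2.2 ∧ 1 ≤ v.2.1 ∧ v.2.1 ≤ m v.2.2 ∧ 1 ≤ v.2.2 ∧ v.2.2 ≤ L

/-- Neighbor of `v` to the east: `(x+1, y, z)`. -/
def eastN (v : Vtx) : Vtx := (v.1 + 1, v.2.1, v.2.2)
/-- Neighbor of `v` to the west: `(x-1, y, z)`. -/
def westN (v : Vtx) : Vtx := (v.1 - 1, v.2.1, v.2.2)
/-- Neighbor of `v` to the north: `(x, y-1, z)`. -/
def northN (v : Vtx) : Vtx := (v.1, v.2.1 - 1, v.2.2)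
/-- Neighbor of `v` to the south: `(x, y+1, z)`. -/
def southN (v : Vtx) : Vtx := (v.1, v.2.1 + 1, v.2.2)
/-- Neighbor of `v` upwards: `(x, y, z-1)`. -/
def upN (v : Vtx) : Vtx := (v.1, v.2.1, v.2.2 - 1)
/-- Neighbor of `v` downwards: `(x, y, z+1)`. -/
def downN (v : Vtx) : Vtx := (v.1, v.2.1, v.2.2 + 1)

/-- The arc set `A` of the topology digraph: both endpoints lie in `V` and the head is a
unit neighbor of the tail (east, west, south, north, down or up). -/
def inA (L : ℕ) (m n : ℕ → ℕ) (a : Vtx × Vtx) : Prop :=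
  memV L m n a.1 ∧ memV L m n a.2 ∧
    ((a.2.1 = a.1.1 + 1 ∧ a.2.2.1 = a.1.2.1 ∧ a.2.2.2 = a.1.2.2) ∨   -- east
     (a.2.1 + 1 = a.1.1 ∧ a.2.2.1 = a.1.2.1 ∧ a.2.2.2 = a.1.2.2) ∨   -- west
     (a.2.1 = a.1.1 ∧ a.2.2.1 = a.1.2.1 + 1 ∧ a.2.2.2 = a.1.2.2) ∨   -- south
     (a.2.1 = a.1.1 ∧ a.2.2.1 + 1 = a.1.2.1 ∧ a.2.2.2 = a.1.2.2) ∨   -- north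
     (a.2.1 = a.1.1 ∧ a.2.2.1 = a.1.2.1 ∧ a.2.2.2 = a.1.2.2 + 1) ∨   -- down
     (a.2.1 = a.1.1 ∧ a.2.2.1 = a.1.2.1 ∧ a.2.2.2 + 1 = a.1.2.2))    -- up

/-- An arc has direction north: same x, smaller y, same z. -/
def dirNorth (a : Vtx × Vtx) : Prop :=
  a.2.1 = a.1.1 ∧ a.2.2.1 < a.1.2.1 ∧ a.2.2.2 = a.1.2.2
/-- An arc has direction east: larger x, same y, same z. -/
def dirEast (a : Vtx × Vtx) : Prop :=
  a.1.1 < a.2.1 ∧ a.2.2.1 = a.1.2.1 ∧ a.2.2.2 = a.1.2.2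
/-- An arc has direction south: same x, larger y, same z. -/
def dirSouth (a : Vtx × Vtx) : Prop :=
  a.2.1 = a.1.1 ∧ a.1.2.1 < a.2.2.1 ∧ a.2.2.2 = a.1.2.2
/-- An arc has direction west: smaller x, same y, same z. -/
def dirWest (a : Vtx × Vtx) : Prop :=
  a.2.1 < a.1.1 ∧ a.2.2.1 = a.1.2.1 ∧ a.2.2.2 = a.1.2.2
/-- An arc has direction up: smaller z. -/
def dirUp (a : Vtx × Vtx) : Prop := a.2.2.2 < a.1.2.2
/-- An arc has direction down: larger z. -/
def dirDown (a : Vtx × Vtx) : Prop := a.1.2.2 < a.2.2.2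

/-- Arc `b` is direct dependent on arc `a` (according to routing function `R`):
both are arcs of the topology, the tail of `b` is the head of `a`, and there is a
destination `d ∈ V` such that `a ∈ R(tail a, d)` and `b ∈ R(tail b, d)`. -/
def directDep (L : ℕ) (m n : ℕ → ℕ) (R : Vtx → Vtx → Set (Vtx × Vtx))
    (a b : Vtx × Vtx) : Prop :=
  inA L m n a ∧ inA L m n b ∧ b.1 = a.2 ∧
    ∃ d : Vtx, memV L m n d ∧ a ∈ R a.1 d ∧ b ∈ R b.1 d

/-- `(f, g)` is a possible turn according to `R`. -/
def possibleTurn (L : ℕ) (m n : ℕ → ℕ) (R : Vtx → Vtx → Set (Vtx × Vtx))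
    (f g : Vtx × Vtx → Prop) : Prop :=
  ∃ a b : Vtx × Vtx, f a ∧ g b ∧ directDep L m n R a b

/-- The routing function `R1` (Z⁺XYZ⁻ routing). -/
def R1 (v d : Vtx) : Set (Vtx × Vtx) :=
  {a | a.1 = v ∧
    ((v.1 = d.1 ∧ d.2.1 < v.2.1 ∧ d.2.2 ≤ v.2.2 ∧ a.2 = northN v) ∨
     (v.1 < d.1 ∧ d.2.2 ≤ v.2.2 ∧ a.2 = eastN v) ∨
     (v.1 = d.1 ∧ v.2.1 < d.2.1 ∧ d.2.2 ≤ v.2.2 ∧ a.2 = southN v) ∨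
     (d.1 < v.1 ∧ d.2.2 ≤ v.2.2 ∧ a.2 = westN v) ∨
     (v.1 = d.1 ∧ v.2.1 = d.2.1 ∧ d.2.2 < v.2.2 ∧ a.2 = upN v) ∨
     (v.2.2 < d.2.2 ∧ a.2 = downN v))}

/-- The guards of `R1` are pairwise exclusive and, for `v ≠ d`, one of them holds; this chain of
tests selects it. -/
def r1NextHop (v d : Vtx) : Vtx :=
  if v.2.2 < d.2.2 then downN v
  else if v.1 < d.1 then eastN v
  else if d.1 < v.1 then westN v
  else if v.2.1 < d.2.1 then southN v
  else if d.2.1 < v.2.1 then northN v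
  else upN v

theorem R1_self (v : Vtx) : R1 v v = ∅ := by
  ext ⟨⟨x, y, z⟩, w⟩
  simp only [R1, Set.mem_ofPred_eq, Set.mem_empty_iff_false, iff_false]
  omega

theorem R1_eq_singleton_of_ne {v d : Vtx} (h : v ≠ d) : R1 v d = {(v, r1NextHop v d)} := by
  obtain ⟨vx, vy, vz⟩ := v
  obtain ⟨dx, dy, dz⟩ := d
  have hne : vx ≠ dx ∨ vy ≠ dy ∨ vz ≠ dz := by
    contrapose! h
    simp [h]
  ext ⟨t, wx, wy, wz⟩
  simp only [R1, Set.mem_ofPred_eq, Set.mem_singleton_iff, Prod.mk.injEq]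
  refine and_congr_right fun _ => ?_
  simp only [r1NextHop, eastN, westN, northN, southN, upN, downN]
  split_ifs <;> simp only [Prod.mk.injEq] <;> omega

theorem R1_total_deterministic_general (v d : Vtx) :
    (v ≠ d → ∃ w : Vtx, R1 v d = {(v, w)}) ∧ (R1 v d = ∅ ↔ v = d) := by
  refine ⟨fun h => ⟨_, R1_eq_singleton_of_ne h⟩, ⟨fun hempty => ?_, fun h => h ▸ R1_self v⟩⟩
  by_contra h
  exact Set.singleton_ne_empty _ (R1_eq_singleton_of_ne h ▸ hempty)

/-- For routers `v ≠ d` exactly one case of `R1` applies, so `R1 v d` is a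
singleton `{(v, w)}`; moreover `R1 v d = ∅` iff `v = d`. -/
theorem R1_total_deterministic (L : ℕ) (m n : ℕ → ℕ) (hL : 2 ≤ L)
    (hm2 : ∀ z, 1 ≤ z → z ≤ L → 2 ≤ m z)
    (hn2 : ∀ z, 1 ≤ z → z ≤ L → 2 ≤ n z)
    (hmMono : ∀ z, 1 ≤ z → z < L → m z ≤ m (z + 1))
    (hnMono : ∀ z, 1 ≤ z → z < L → n z ≤ n (z + 1))
    (v d : Vtx) (hv : memV L m n v) (hd : memV L m n d) :
    (v ≠ d → ∃ w : Vtx, R1 v d = {(v, w)}) ∧ (R1 v d = ∅ ↔ v = d) :=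
  R1_total_deterministic_general v d
end

section
/- (Lemma 2) For every v, d ∈ V with v ≠ d, the arc prescribed by the routing function R1(v, d) exists in A; that is, whenever R1 returns a direction at v toward d, the neighboring router of v in that direction lies in V (in particular, the nonexistent links at the outer border of the 3D mesh and the missing up links above coarser layers are never required by R1). -/
/-!
An x- or y-move is prescribed only toward `d`'s coordinate, so its target stays within
`d`'s coordinate range, and it is made only in a layer `z ≥ d.z`; an up move is made only
above `d = (x, y, d.z)` and lands in layer `z - 1 ≥ d.z`. Since the layer sizes `m`, `n`
grow with depth, `d`'s coordinate range fits inside every layer below it, which keeps all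
these targets in `V`. A down move enters a layer at least as large as the current one.
-/

lemma monotoneOn_Icc_of_le_add_one {f : ℕ → ℕ} {L : ℕ}
    (h : ∀ z, 1 ≤ z → z < L → f z ≤ f (z + 1)) : MonotoneOn f (Set.Icc 1 L) :=
  monotoneOn_of_le_add_one Set.ordConnected_Icc fun z _ hz hz1 ↦ h z hz.1 (by
    simp only [Set.mem_Icc] at hz1; omega)

section Arcs

variable {L : ℕ} {m n : ℕ → ℕ} {v : Vtx}

lemma inA_eastN (hv : memV L m n v) (h : v.1 < n v.2.2) : inA L m n (v, eastN v) := by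
  refine ⟨hv, ?_, Or.inl ⟨rfl, rfl, rfl⟩⟩
  simp only [memV, eastN] at hv ⊢
  omega

lemma inA_westN (hv : memV L m n v) (h : 1 < v.1) : inA L m n (v, westN v) := by
  refine ⟨hv, ?_, Or.inr <| Or.inl ⟨Nat.sub_add_cancel h.le, rfl, rfl⟩⟩
  simp only [memV, westN] at hv ⊢
  omega

lemma inA_southN (hv : memV L m n v) (h : v.2.1 < m v.2.2) : inA L m n (v, southN v) := by
  refine ⟨hv, ?_, Or.inr <| Or.inr <| Or.inl ⟨rfl, rfl, rfl⟩⟩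
  simp only [memV, southN] at hv ⊢
  omega

lemma inA_northN (hv : memV L m n v) (h : 1 < v.2.1) : inA L m n (v, northN v) := by
  refine ⟨hv, ?_, Or.inr <| Or.inr <| Or.inr <| Or.inl ⟨rfl, Nat.sub_add_cancel h.le, rfl⟩⟩
  simp only [memV, northN] at hv ⊢
  omega

lemma inA_downN (hv : memV L m n v) (hz : v.2.2 < L) (hx : n v.2.2 ≤ n (v.2.2 + 1))
    (hy : m v.2.2 ≤ m (v.2.2 + 1)) : inA L m n (v, downN v) := by
  refine ⟨hv, ?_, Or.inr <| Or.inr <| Or.inr <| Or.inr <| Or.inl ⟨rfl, rfl, rfl⟩⟩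
  simp only [memV, downN] at hv ⊢
  omega

lemma inA_upN (hv : memV L m n v) (hz : 1 < v.2.2) (hx : v.1 ≤ n (v.2.2 - 1))
    (hy : v.2.1 ≤ m (v.2.2 - 1)) : inA L m n (v, upN v) := by
  refine ⟨hv, ?_, Or.inr <| Or.inr <| Or.inr <| Or.inr <| Or.inr
    ⟨rfl, rfl, Nat.sub_add_cancel hz.le⟩⟩
  simp only [memV, upN] at hv ⊢
  omega

end Arcs

theorem R1_arcs_exist_general (L : ℕ) (m n : ℕ → ℕ)
    (hmMono : ∀ z, 1 ≤ z → z < L → m z ≤ m (z + 1))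
    (hnMono : ∀ z, 1 ≤ z → z < L → n z ≤ n (z + 1))
    (v d : Vtx) (hv : memV L m n v) (hd : memV L m n d) :
    ∀ a ∈ R1 v d, inA L m n a := by
  have hm := monotoneOn_Icc_of_le_add_one hmMono
  have hn := monotoneOn_Icc_of_le_add_one hnMono
  obtain ⟨-, -, -, -, hvz1, hvzL⟩ := id hv
  obtain ⟨hdx1, hdx, hdy1, hdy, hdz1, hdzL⟩ := hd
  rintro ⟨u, w⟩ ⟨hu, h⟩
  dsimp only at hu h
  subst u
  rcases h with ⟨-, hy, -, rfl⟩ | ⟨hx, hz, rfl⟩ | ⟨-, hy, hz, rfl⟩ | ⟨hx, -, rfl⟩ |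
      ⟨hx, hy, hz, rfl⟩ | ⟨hz, rfl⟩
  · exact inA_northN hv (by omega)
  · exact inA_eastN hv (by have := hn ⟨hdz1, hdzL⟩ ⟨hvz1, hvzL⟩ hz; omega)
  · exact inA_southN hv (by have := hm ⟨hdz1, hdzL⟩ ⟨hvz1, hvzL⟩ hz; omega)
  · exact inA_westN hv (by omega)
  · have hlayer : d.2.2 ≤ v.2.2 - 1 := by omega
    have hx' := hn ⟨hdz1, hdzL⟩ ⟨by omega, by omega⟩ hlayer
    have hy' := hm ⟨hdz1, hdzL⟩ ⟨by omega, by omega⟩ hlayer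
    exact inA_upN hv (by omega) (by omega) (by omega)
  · exact inA_downN hv (by omega) (hnMono _ hvz1 (by omega)) (hmMono _ hvz1 (by omega))

/-- Lemma 2: whenever `R1` returns a direction at `v` toward `d`, the prescribed
arc exists in the arc set `A` of the 3D mesh topology digraph. -/
theorem R1_arcs_exist (L : ℕ) (m n : ℕ → ℕ) (hL : 2 ≤ L)
    (hm2 : ∀ z, 1 ≤ z → z ≤ L → 2 ≤ m z)
    (hn2 : ∀ z, 1 ≤ z → z ≤ L → 2 ≤ n z)
    (hmMono : ∀ z, 1 ≤ z → z < L → m z ≤ m (z + 1))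
    (hnMono : ∀ z, 1 ≤ z → z < L → n z ≤ n (z + 1))
    (v d : Vtx) (hv : memV L m n v) (hd : memV L m n d) (hvd : v ≠ d) :
    ∀ a ∈ R1 v d, inA L m n a :=
  R1_arcs_exist_general L m n hmMono hnMono v d hv hd
end

section
/- If v, d ∈ V with v ≠ d and R1(v, d) = {(v, w)}, then the Manhattan distance to the destination decreases by exactly one: |w_x − d_x| + |w_y − d_y| + |w_z − d_z| = |v_x − d_x| + |v_y − d_y| + |v_z − d_z| − 1. -/
/-! Every `R1` step changes exactly one coordinate, by one unit towards the destination, so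
exactly one of the three summands of the Manhattan distance drops by one. -/

/-- Manhattan distance in `ℤ`, so that its decrease can be written without truncated
subtraction. -/
def manhattanDist (v d : Vtx) : ℤ :=
  |(v.1 : ℤ) - d.1| + |(v.2.1 : ℤ) - d.2.1| + |(v.2.2 : ℤ) - d.2.2|

lemma abs_natCast_succ_sub_of_lt {a b : ℕ} (h : a < b) :
    |((a + 1 : ℕ) : ℤ) - b| = |(a : ℤ) - b| - 1 := by
  rw [abs_of_nonpos (by omega), abs_of_neg (by omega)]
  push_cast
  ring

lemma abs_natCast_pred_sub_of_lt {a b : ℕ} (h : b < a) :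
    |((a - 1 : ℕ) : ℤ) - b| = |(a : ℤ) - b| - 1 := by
  rw [abs_of_nonneg (by omega), abs_of_pos (by omega)]
  omega

lemma manhattanDist_of_mem_R1 {v d w : Vtx} (h : (v, w) ∈ R1 v d) :
    manhattanDist w d = manhattanDist v d - 1 := by
  obtain ⟨-, hstep⟩ := h
  unfold manhattanDist
  rcases hstep with ⟨-, hy, -, rfl⟩ | ⟨hx, -, rfl⟩ | ⟨-, hy, -, rfl⟩ | ⟨hx, -, rfl⟩ |
      ⟨-, -, hz, rfl⟩ | ⟨hz, rfl⟩
  · rw [northN, abs_natCast_pred_sub_of_lt hy]; ring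
  · rw [eastN, abs_natCast_succ_sub_of_lt hx]; ring
  · rw [southN, abs_natCast_succ_sub_of_lt hy]; ring
  · rw [westN, abs_natCast_pred_sub_of_lt hx]; ring
  · rw [upN, abs_natCast_pred_sub_of_lt hz]; ring
  · rw [downN, abs_natCast_succ_sub_of_lt hz]; ring

theorem R1_step_decreases_manhattan_general
    (v d : Vtx)
    (w : Vtx) (hw : R1 v d = {(v, w)}) :
    |(w.1 : ℤ) - (d.1 : ℤ)| + |(w.2.1 : ℤ) - (d.2.1 : ℤ)| + |(w.2.2 : ℤ) - (d.2.2 : ℤ)|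
      = |(v.1 : ℤ) - (d.1 : ℤ)| + |(v.2.1 : ℤ) - (d.2.1 : ℤ)|
          + |(v.2.2 : ℤ) - (d.2.2 : ℤ)| - 1 :=
  manhattanDist_of_mem_R1 (hw ▸ rfl)

/-- Each step of `R1` decreases the Manhattan distance to the destination by
exactly one. -/
theorem R1_step_decreases_manhattan (L : ℕ) (m n : ℕ → ℕ) (hL : 2 ≤ L)
    (hm2 : ∀ z, 1 ≤ z → z ≤ L → 2 ≤ m z)
    (hn2 : ∀ z, 1 ≤ z → z ≤ L → 2 ≤ n z)
    (hmMono : ∀ z, 1 ≤ z → z < L → m z ≤ m (z + 1))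
    (hnMono : ∀ z, 1 ≤ z → z < L → n z ≤ n (z + 1))
    (v d : Vtx) (hv : memV L m n v) (hd : memV L m n d) (hvd : v ≠ d)
    (w : Vtx) (hw : R1 v d = {(v, w)}) :
    |(w.1 : ℤ) - (d.1 : ℤ)| + |(w.2.1 : ℤ) - (d.2.1 : ℤ)| + |(w.2.2 : ℤ) - (d.2.2 : ℤ)|
      = |(v.1 : ℤ) - (d.1 : ℤ)| + |(v.2.1 : ℤ) - (d.2.1 : ℤ)|
          + |(v.2.2 : ℤ) - (d.2.2 : ℤ)| - 1 :=
  R1_step_decreases_manhattan_general v d w hw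
end

section
/- (Lemma 3) The routing function R1 is connected: for every pair of routers s, d ∈ V there exists a directed path v_1 = s, v_2, …, v_k = d in the 3D mesh topology digraph T such that each arc (v_i, v_{i+1}) belongs to R1(v_i, d). -/
open Relation

theorem exists_seq_of_reflTransGen {α : Type*} {r : α → α → Prop} {a b : α}
    (h : ReflTransGen r a b) :
    ∃ (k : ℕ) (p : ℕ → α), p 0 = a ∧ p k = b ∧ ∀ i < k, r (p i) (p (i + 1)) := by
  induction h using ReflTransGen.head_induction_on with
  | refl => exact ⟨0, fun _ => b, rfl, rfl, by simp⟩
  | @head a c hac _ ih =>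
    obtain ⟨k, p, hp0, hpk, hp⟩ := ih
    refine ⟨k + 1, fun | 0 => a | i + 1 => p i, rfl, hpk, ?_⟩
    rintro (_ | i) hi
    · simpa [hp0] using hac
    · exact hp i (by omega)

theorem reflTransGen_of_forall_exists_lt {α : Type*} {r : α → α → Prop} {S : Set α} {b : α}
    (f : α → ℕ) (h : ∀ x ∈ S, x ≠ b → ∃ y ∈ S, r x y ∧ f y < f x) :
    ∀ x ∈ S, ReflTransGen r x b := by
  intro x
  induction hfx : f x using Nat.strong_induction_on generalizing x with
  | _ N ih =>
    intro hx
    by_cases hxb : x = b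
    · exact hxb ▸ ReflTransGen.refl
    obtain ⟨y, hy, hxy, hfy⟩ := h x hx hxb
    exact .head hxy (ih (f y) (hfx ▸ hfy) y rfl hy)

def R1Step (L : ℕ) (m n : ℕ → ℕ) (d u v : Vtx) : Prop :=
  inA L m n (u, v) ∧ (u, v) ∈ R1 u d

def l1Dist (u v : Vtx) : ℕ :=
  Nat.dist u.1 v.1 + Nat.dist u.2.1 v.2.1 + Nat.dist u.2.2 v.2.2

theorem monotoneOn_Icc_of_le_succ {L : ℕ} {f : ℕ → ℕ}
    (hf : ∀ z, 1 ≤ z → z < L → f z ≤ f (z + 1)) : MonotoneOn f (Set.Icc 1 L) :=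
  monotoneOn_of_le_succ Set.ordConnected_Icc fun z _ hz hz' => by
    rw [Order.succ_eq_add_one] at hz' ⊢
    exact hf z hz.1 (by simpa using hz'.2)

section

variable {L : ℕ} {m n : ℕ → ℕ}

theorem memV_of_layer_le (hm : MonotoneOn m (Set.Icc 1 L)) (hn : MonotoneOn n (Set.Icc 1 L))
    {x y z z' : ℕ} (hv : memV L m n (x, y, z)) (hzz' : z ≤ z') (hz' : z' ≤ L) :
    memV L m n (x, y, z') := by
  simp only [memV] at hv ⊢
  have hmz : m z ≤ m z' := hm ⟨hv.2.2.2.2.1, hv.2.2.2.2.2⟩ ⟨by omega, hz'⟩ hzz'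
  have hnz : n z ≤ n z' := hn ⟨hv.2.2.2.2.1, hv.2.2.2.2.2⟩ ⟨by omega, hz'⟩ hzz'
  omega

theorem memV_of_between {x y z x₁ y₁ x₂ y₂ : ℕ}
    (h₁ : memV L m n (x₁, y₁, z)) (h₂ : memV L m n (x₂, y₂, z))
    (hx : min x₁ x₂ ≤ x ∧ x ≤ max x₁ x₂)
    (hy : min y₁ y₂ ≤ y ∧ y ≤ max y₁ y₂) :
    memV L m n (x, y, z) := by
  simp only [memV] at *
  omega

theorem exists_R1Step_l1Dist_lt (hm : MonotoneOn m (Set.Icc 1 L))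
    (hn : MonotoneOn n (Set.Icc 1 L)) {s d : Vtx} (hs : memV L m n s) (hd : memV L m n d)
    (hsd : s ≠ d) : ∃ v, R1Step L m n d s v ∧ l1Dist v d < l1Dist s d := by
  obtain ⟨sx, sy, sz⟩ := s
  obtain ⟨dx, dy, dz⟩ := d
  have hdL : dz ≤ L := hd.2.2.2.2.2
  have hsL : sz ≤ L := hs.2.2.2.2.2
  rcases lt_or_ge sz dz with hz | hz
  · have hv := memV_of_layer_le hm hn hs (z' := sz + 1) (by omega) (by omega)
    refine ⟨(sx, sy, sz + 1), ⟨⟨hs, hv, .inr <| .inr <| .inr <| .inr <| .inl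
      ⟨rfl, rfl, rfl⟩⟩, rfl,
      .inr <| .inr <| .inr <| .inr <| .inr ⟨hz, rfl⟩⟩, ?_⟩
    simp only [l1Dist, Nat.dist]; omega
  have hdlayer := memV_of_layer_le hm hn hd hz hsL
  rcases lt_trichotomy sx dx with hx | rfl | hx
  · have hv := memV_of_between (x := sx + 1) (y := sy) hs hdlayer (by omega) (by omega)
    refine ⟨(sx + 1, sy, sz), ⟨⟨hs, hv, .inl ⟨rfl, rfl, rfl⟩⟩, rfl,
      .inr <| .inl ⟨hx, hz, rfl⟩⟩, ?_⟩
    simp only [l1Dist, Nat.dist]; omega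
  · rcases lt_trichotomy sy dy with hy | rfl | hy
    · have hv := memV_of_between (x := sx) (y := sy + 1) hs hdlayer (by omega) (by omega)
      refine ⟨(sx, sy + 1, sz), ⟨⟨hs, hv, .inr <| .inr <| .inl ⟨rfl, rfl, rfl⟩⟩, rfl,
        .inr <| .inr <| .inl ⟨rfl, hy, hz, rfl⟩⟩, ?_⟩
      simp only [l1Dist, Nat.dist]; omega
    · have hz' : dz < sz := lt_of_le_of_ne hz fun h => hsd (h ▸ rfl)
      have hv := memV_of_layer_le hm hn hd (z' := sz - 1) (by omega) (by omega)
      refine ⟨(sx, sy, sz - 1), ⟨⟨hs, hv, .inr <| .inr <| .inr <| .inr <| .inr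
        ⟨rfl, rfl, Nat.sub_add_cancel (by omega)⟩⟩, rfl,
        .inr <| .inr <| .inr <| .inr <| .inl ⟨rfl, rfl, hz', rfl⟩⟩, ?_⟩
      simp only [l1Dist, Nat.dist]; omega
    · have hv := memV_of_between (x := sx) (y := sy - 1) hs hdlayer (by omega) (by omega)
      refine ⟨(sx, sy - 1, sz), ⟨⟨hs, hv, .inr <| .inr <| .inr <| .inl
        ⟨rfl, Nat.sub_add_cancel (by omega), rfl⟩⟩, rfl,
        .inl ⟨rfl, hy, hz, rfl⟩⟩, ?_⟩
      simp only [l1Dist, Nat.dist]; omega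
  · have hv := memV_of_between (x := sx - 1) (y := sy) hs hdlayer (by omega) (by omega)
    refine ⟨(sx - 1, sy, sz), ⟨⟨hs, hv, .inr <| .inl
      ⟨Nat.sub_add_cancel (by omega), rfl, rfl⟩⟩, rfl,
      .inr <| .inr <| .inr <| .inl ⟨hx, hz, rfl⟩⟩, ?_⟩
    simp only [l1Dist, Nat.dist]; omega

end

theorem R1_connected_general (L : ℕ) (m n : ℕ → ℕ)
    (hmMono : ∀ z, 1 ≤ z → z < L → m z ≤ m (z + 1))
    (hnMono : ∀ z, 1 ≤ z → z < L → n z ≤ n (z + 1))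
    (s d : Vtx) (hs : memV L m n s) (hd : memV L m n d) :
    ∃ (k : ℕ) (p : ℕ → Vtx), p 0 = s ∧ p k = d ∧
      ∀ i < k, inA L m n (p i, p (i + 1)) ∧ (p i, p (i + 1)) ∈ R1 (p i) d := by
  have hm := monotoneOn_Icc_of_le_succ hmMono
  have hn := monotoneOn_Icc_of_le_succ hnMono
  have hreach : ReflTransGen (R1Step L m n d) s d := by
    refine reflTransGen_of_forall_exists_lt (S := {v | memV L m n v}) (fun v => l1Dist v d)
      (fun v hv hvd => ?_) s hs
    obtain ⟨w, hw, hwd⟩ := exists_R1Step_l1Dist_lt hm hn hv hd hvd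
    exact ⟨w, hw.1.2.1, hw, hwd⟩
  exact exists_seq_of_reflTransGen hreach

/-- Lemma 3: the routing function `R1` is connected: for every pair of routers
`s, d ∈ V` there is a directed path in the topology digraph from `s` to `d`
each of whose arcs is delivered by `R1` (toward `d`). -/
theorem R1_connected (L : ℕ) (m n : ℕ → ℕ) (hL : 2 ≤ L)
    (hm2 : ∀ z, 1 ≤ z → z ≤ L → 2 ≤ m z)
    (hn2 : ∀ z, 1 ≤ z → z ≤ L → 2 ≤ n z)
    (hmMono : ∀ z, 1 ≤ z → z < L → m z ≤ m (z + 1))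
    (hnMono : ∀ z, 1 ≤ z → z < L → n z ≤ n (z + 1))
    (s d : Vtx) (hs : memV L m n s) (hd : memV L m n d) :
    ∃ (k : ℕ) (p : ℕ → Vtx), p 0 = s ∧ p k = d ∧
      ∀ i < k, inA L m n (p i, p (i + 1)) ∧ (p i, p (i + 1)) ∈ R1 (p i) d :=
  R1_connected_general L m n hmMono hnMono s d hs hd
end

section
/- (Impossible turns of R1, Table 1) None of the following ordered pairs of cardinal directions is a possible turn according to R1: (north, east), (north, south), (north, west), (north, down), (east, west), (east, down), (south, north), (south, east), (south, west), (south, down), (west, east), (west, down), (up, north), (up, east), (up, south), (up, west), (up, down), and (down, up). In particular, if an arc b is direct dependent on an up arc a according to R1, then b is an up arc. -/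
/-!
Under `R1` the arc leaving a router is determined by a guard comparing the router with the
destination, and each step keeps a weakened form of that guard at the head of the arc (an east
step toward `d` ends at `x ≤ d.x`, an up step ends on the column of `d`, …). A turn `(f, g)` is
therefore impossible as soon as the head invariant of `f` contradicts the guard of `g`. Every arc
chosen by `R1` has one of the six directions, so an arc after an up arc, being neither north,
east, south, west nor down, is again an up arc.
-/

section R1Steps

variable {v w d : Vtx}

theorem coords_of_mem_R1 (ha : (v, w) ∈ R1 v d) :
    (v.1 = d.1 ∧ d.2.1 < v.2.1 ∧ d.2.2 ≤ v.2.2 ∧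
        w.1 = v.1 ∧ w.2.1 = v.2.1 - 1 ∧ w.2.2 = v.2.2) ∨
      (v.1 < d.1 ∧ d.2.2 ≤ v.2.2 ∧
        w.1 = v.1 + 1 ∧ w.2.1 = v.2.1 ∧ w.2.2 = v.2.2) ∨
      (v.1 = d.1 ∧ v.2.1 < d.2.1 ∧ d.2.2 ≤ v.2.2 ∧
        w.1 = v.1 ∧ w.2.1 = v.2.1 + 1 ∧ w.2.2 = v.2.2) ∨
      (d.1 < v.1 ∧ d.2.2 ≤ v.2.2 ∧
        w.1 = v.1 - 1 ∧ w.2.1 = v.2.1 ∧ w.2.2 = v.2.2) ∨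
      (v.1 = d.1 ∧ v.2.1 = d.2.1 ∧ d.2.2 < v.2.2 ∧
        w.1 = v.1 ∧ w.2.1 = v.2.1 ∧ w.2.2 = v.2.2 - 1) ∨
      (v.2.2 < d.2.2 ∧
        w.1 = v.1 ∧ w.2.1 = v.2.1 ∧ w.2.2 = v.2.2 + 1) := by
  simpa only [R1, Set.mem_ofPred_eq, northN, eastN, southN, westN, upN, downN, Prod.ext_iff,
    true_and, and_assoc] using ha

theorem dir_of_mem_R1 (ha : (v, w) ∈ R1 v d) :
    dirNorth (v, w) ∨ dirEast (v, w) ∨ dirSouth (v, w) ∨ dirWest (v, w) ∨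
      dirUp (v, w) ∨ dirDown (v, w) := by
  dsimp only [dirNorth, dirEast, dirSouth, dirWest, dirUp, dirDown]
  rcases coords_of_mem_R1 ha with h | h | h | h | h | h <;> omega

theorem R1_guard_of_dirNorth (hdir : dirNorth (v, w)) (ha : (v, w) ∈ R1 v d) :
    v.1 = d.1 ∧ d.2.1 < v.2.1 ∧ d.2.2 ≤ v.2.2 := by
  dsimp only [dirNorth] at hdir
  rcases coords_of_mem_R1 ha with h | h | h | h | h | h <;> omega

theorem R1_head_of_dirNorth (hdir : dirNorth (v, w)) (ha : (v, w) ∈ R1 v d) :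
    w.1 = d.1 ∧ d.2.1 ≤ w.2.1 ∧ d.2.2 ≤ w.2.2 := by
  dsimp only [dirNorth] at hdir
  rcases coords_of_mem_R1 ha with h | h | h | h | h | h <;> omega

theorem R1_guard_of_dirEast (hdir : dirEast (v, w)) (ha : (v, w) ∈ R1 v d) :
    v.1 < d.1 ∧ d.2.2 ≤ v.2.2 := by
  dsimp only [dirEast] at hdir
  rcases coords_of_mem_R1 ha with h | h | h | h | h | h <;> omega

theorem R1_head_of_dirEast (hdir : dirEast (v, w)) (ha : (v, w) ∈ R1 v d) :
    w.1 ≤ d.1 ∧ d.2.2 ≤ w.2.2 := by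
  dsimp only [dirEast] at hdir
  rcases coords_of_mem_R1 ha with h | h | h | h | h | h <;> omega

theorem R1_guard_of_dirSouth (hdir : dirSouth (v, w)) (ha : (v, w) ∈ R1 v d) :
    v.1 = d.1 ∧ v.2.1 < d.2.1 ∧ d.2.2 ≤ v.2.2 := by
  dsimp only [dirSouth] at hdir
  rcases coords_of_mem_R1 ha with h | h | h | h | h | h <;> omega

theorem R1_head_of_dirSouth (hdir : dirSouth (v, w)) (ha : (v, w) ∈ R1 v d) :
    w.1 = d.1 ∧ w.2.1 ≤ d.2.1 ∧ d.2.2 ≤ w.2.2 := by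
  dsimp only [dirSouth] at hdir
  rcases coords_of_mem_R1 ha with h | h | h | h | h | h <;> omega

theorem R1_guard_of_dirWest (hdir : dirWest (v, w)) (ha : (v, w) ∈ R1 v d) :
    d.1 < v.1 ∧ d.2.2 ≤ v.2.2 := by
  dsimp only [dirWest] at hdir
  rcases coords_of_mem_R1 ha with h | h | h | h | h | h <;> omega

theorem R1_head_of_dirWest (hdir : dirWest (v, w)) (ha : (v, w) ∈ R1 v d) :
    d.1 ≤ w.1 ∧ d.2.2 ≤ w.2.2 := by
  dsimp only [dirWest] at hdir
  rcases coords_of_mem_R1 ha with h | h | h | h | h | h <;> omega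

theorem R1_guard_of_dirUp (hdir : dirUp (v, w)) (ha : (v, w) ∈ R1 v d) :
    v.1 = d.1 ∧ v.2.1 = d.2.1 ∧ d.2.2 < v.2.2 := by
  dsimp only [dirUp] at hdir
  rcases coords_of_mem_R1 ha with h | h | h | h | h | h <;> omega

theorem R1_head_of_dirUp (hdir : dirUp (v, w)) (ha : (v, w) ∈ R1 v d) :
    w.1 = d.1 ∧ w.2.1 = d.2.1 ∧ d.2.2 ≤ w.2.2 := by
  dsimp only [dirUp] at hdir
  rcases coords_of_mem_R1 ha with h | h | h | h | h | h <;> omega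

theorem R1_guard_of_dirDown (hdir : dirDown (v, w)) (ha : (v, w) ∈ R1 v d) :
    v.2.2 < d.2.2 := by
  dsimp only [dirDown] at hdir
  rcases coords_of_mem_R1 ha with h | h | h | h | h | h <;> omega

theorem R1_head_of_dirDown (hdir : dirDown (v, w)) (ha : (v, w) ∈ R1 v d) :
    w.2.2 ≤ d.2.2 := by
  dsimp only [dirDown] at hdir
  rcases coords_of_mem_R1 ha with h | h | h | h | h | h <;> omega

end R1Steps

theorem not_possibleTurn_R1 {L : ℕ} {m n : ℕ → ℕ} {f g : Vtx × Vtx → Prop}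
    {head guard : Vtx → Vtx → Prop}
    (hf : ∀ {v w d : Vtx}, f (v, w) → (v, w) ∈ R1 v d → head w d)
    (hg : ∀ {v w d : Vtx}, g (v, w) → (v, w) ∈ R1 v d → guard v d)
    (h : ∀ w d, head w d → ¬ guard w d) :
    ¬ possibleTurn L m n R1 f g := by
  rintro ⟨⟨_, v⟩, ⟨_, w⟩, hfa, hgb, -, -, rfl, d, -, ha, hb⟩
  exact h _ d (hf hfa ha) (hg hgb hb)

theorem dirUp_of_directDep_R1 {L : ℕ} {m n : ℕ → ℕ} {f : Vtx × Vtx → Prop}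
    (hN : ¬ possibleTurn L m n R1 f dirNorth) (hE : ¬ possibleTurn L m n R1 f dirEast)
    (hS : ¬ possibleTurn L m n R1 f dirSouth) (hW : ¬ possibleTurn L m n R1 f dirWest)
    (hD : ¬ possibleTurn L m n R1 f dirDown) {a b : Vtx × Vtx} (ha : f a)
    (hab : directDep L m n R1 a b) : dirUp b := by
  obtain ⟨v, w⟩ := b
  obtain ⟨d, -, -, hb⟩ := hab.2.2.2
  rcases dir_of_mem_R1 hb with h | h | h | h | h | h
  exacts [(hN ⟨a, _, ha, h, hab⟩).elim, (hE ⟨a, _, ha, h, hab⟩).elim,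
    (hS ⟨a, _, ha, h, hab⟩).elim, (hW ⟨a, _, ha, h, hab⟩).elim, h, (hD ⟨a, _, ha, h, hab⟩).elim]

theorem R1_impossible_turns_general (L : ℕ) (m n : ℕ → ℕ) :
    ¬ possibleTurn L m n R1 dirNorth dirEast ∧
    ¬ possibleTurn L m n R1 dirNorth dirSouth ∧
    ¬ possibleTurn L m n R1 dirNorth dirWest ∧
    ¬ possibleTurn L m n R1 dirNorth dirDown ∧
    ¬ possibleTurn L m n R1 dirEast dirWest ∧
    ¬ possibleTurn L m n R1 dirEast dirDown ∧
    ¬ possibleTurn L m n R1 dirSouth dirNorth ∧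
    ¬ possibleTurn L m n R1 dirSouth dirEast ∧
    ¬ possibleTurn L m n R1 dirSouth dirWest ∧
    ¬ possibleTurn L m n R1 dirSouth dirDown ∧
    ¬ possibleTurn L m n R1 dirWest dirEast ∧
    ¬ possibleTurn L m n R1 dirWest dirDown ∧
    ¬ possibleTurn L m n R1 dirUp dirNorth ∧
    ¬ possibleTurn L m n R1 dirUp dirEast ∧
    ¬ possibleTurn L m n R1 dirUp dirSouth ∧
    ¬ possibleTurn L m n R1 dirUp dirWest ∧
    ¬ possibleTurn L m n R1 dirUp dirDown ∧
    ¬ possibleTurn L m n R1 dirDown dirUp ∧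
    (∀ a b : Vtx × Vtx, dirUp a → directDep L m n R1 a b → dirUp b) := by
  have upNorth : ¬ possibleTurn L m n R1 dirUp dirNorth :=
    not_possibleTurn_R1 R1_head_of_dirUp R1_guard_of_dirNorth fun _ _ => by omega
  have upEast : ¬ possibleTurn L m n R1 dirUp dirEast :=
    not_possibleTurn_R1 R1_head_of_dirUp R1_guard_of_dirEast fun _ _ => by omega
  have upSouth : ¬ possibleTurn L m n R1 dirUp dirSouth :=
    not_possibleTurn_R1 R1_head_of_dirUp R1_guard_of_dirSouth fun _ _ => by omega
  have upWest : ¬ possibleTurn L m n R1 dirUp dirWest :=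
    not_possibleTurn_R1 R1_head_of_dirUp R1_guard_of_dirWest fun _ _ => by omega
  have upDown : ¬ possibleTurn L m n R1 dirUp dirDown :=
    not_possibleTurn_R1 R1_head_of_dirUp R1_guard_of_dirDown fun _ _ => by omega
  refine ⟨not_possibleTurn_R1 R1_head_of_dirNorth R1_guard_of_dirEast fun _ _ => by omega,
    not_possibleTurn_R1 R1_head_of_dirNorth R1_guard_of_dirSouth fun _ _ => by omega,
    not_possibleTurn_R1 R1_head_of_dirNorth R1_guard_of_dirWest fun _ _ => by omega,
    not_possibleTurn_R1 R1_head_of_dirNorth R1_guard_of_dirDown fun _ _ => by omega,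
    not_possibleTurn_R1 R1_head_of_dirEast R1_guard_of_dirWest fun _ _ => by omega,
    not_possibleTurn_R1 R1_head_of_dirEast R1_guard_of_dirDown fun _ _ => by omega,
    not_possibleTurn_R1 R1_head_of_dirSouth R1_guard_of_dirNorth fun _ _ => by omega,
    not_possibleTurn_R1 R1_head_of_dirSouth R1_guard_of_dirEast fun _ _ => by omega,
    not_possibleTurn_R1 R1_head_of_dirSouth R1_guard_of_dirWest fun _ _ => by omega,
    not_possibleTurn_R1 R1_head_of_dirSouth R1_guard_of_dirDown fun _ _ => by omega,
    not_possibleTurn_R1 R1_head_of_dirWest R1_guard_of_dirEast fun _ _ => by omega,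
    not_possibleTurn_R1 R1_head_of_dirWest R1_guard_of_dirDown fun _ _ => by omega,
    upNorth, upEast, upSouth, upWest, upDown,
    not_possibleTurn_R1 R1_head_of_dirDown R1_guard_of_dirUp fun _ _ => by omega,
    fun _ _ => dirUp_of_directDep_R1 upNorth upEast upSouth upWest upDown⟩

/-- Impossible turns of `R1` (Table 1): none of the listed 18 ordered pairs of
cardinal directions is a possible turn according to `R1`; in particular any arc
direct dependent on an up arc is itself an up arc. -/
theorem R1_impossible_turns (L : ℕ) (m n : ℕ → ℕ) (hL : 2 ≤ L)
    (hm2 : ∀ z, 1 ≤ z → z ≤ L → 2 ≤ m z)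
    (hn2 : ∀ z, 1 ≤ z → z ≤ L → 2 ≤ n z)
    (hmMono : ∀ z, 1 ≤ z → z < L → m z ≤ m (z + 1))
    (hnMono : ∀ z, 1 ≤ z → z < L → n z ≤ n (z + 1)) :
    ¬ possibleTurn L m n R1 dirNorth dirEast ∧
    ¬ possibleTurn L m n R1 dirNorth dirSouth ∧
    ¬ possibleTurn L m n R1 dirNorth dirWest ∧
    ¬ possibleTurn L m n R1 dirNorth dirDown ∧
    ¬ possibleTurn L m n R1 dirEast dirWest ∧
    ¬ possibleTurn L m n R1 dirEast dirDown ∧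
    ¬ possibleTurn L m n R1 dirSouth dirNorth ∧
    ¬ possibleTurn L m n R1 dirSouth dirEast ∧
    ¬ possibleTurn L m n R1 dirSouth dirWest ∧
    ¬ possibleTurn L m n R1 dirSouth dirDown ∧
    ¬ possibleTurn L m n R1 dirWest dirEast ∧
    ¬ possibleTurn L m n R1 dirWest dirDown ∧
    ¬ possibleTurn L m n R1 dirUp dirNorth ∧
    ¬ possibleTurn L m n R1 dirUp dirEast ∧
    ¬ possibleTurn L m n R1 dirUp dirSouth ∧
    ¬ possibleTurn L m n R1 dirUp dirWest ∧
    ¬ possibleTurn L m n R1 dirUp dirDown ∧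
    ¬ possibleTurn L m n R1 dirDown dirUp ∧
    (∀ a b : Vtx × Vtx, dirUp a → directDep L m n R1 a b → dirUp b) :=
  R1_impossible_turns_general L m n
end

section
/- (Theorem 1) The channel dependency graph of the routing function R1 on the 3D mesh topology digraph is acyclic; together with the connectivity of R1, by Duato's theorem the routing R1 (Z⁺XY Z⁻ routing) is deadlock-free. -/
/-!
Every arc of `R1` gets a rank in `ℕ ×ₗ ℤ`: its phase (down, east, west, north, south, up, in
this order) and then the coordinate it moves along, negated for moves that decrease it. If `b`
is direct dependent on `a`, both are routed toward the same destination `d`, so `b` either keeps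
the direction of `a` and moves one step further, or turns into a later phase: turns into an
earlier phase (east after west, down after anything but down, …) would contradict the position of
`d` relative to the routers. Ranks thus increase strictly along the CDG, which rules out cycles.
-/

theorem not_exists_closed_chain_of_map_lt {α β : Type*} [Preorder β] {r : α → α → Prop}
    (f : α → β) (hf : ∀ a b, r a b → f a < f b) :
    ¬ ∃ (k : ℕ) (a : ℕ → α), 0 < k ∧ (∀ i, i + 1 < k → r (a i) (a (i + 1))) ∧
      r (a (k - 1)) (a 0) := by
  rintro ⟨k, a, hk, hchain, hclose⟩
  have hmono : ∀ i < k, f (a 0) ≤ f (a i) := by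
    intro i
    induction i with
    | zero => exact fun _ => le_rfl
    | succ i ih => exact fun hi => (ih (by omega)).trans (hf _ _ (hchain i hi)).le
  exact (hmono (k - 1) (by omega)).not_gt (hf _ _ hclose)

def arcRank (a : Vtx × Vtx) : ℕ ×ₗ ℤ :=
  if a.1.2.2 < a.2.2.2 then toLex (0, a.2.2.2)
  else if a.1.1 < a.2.1 then toLex (1, a.2.1)
  else if a.2.1 < a.1.1 then toLex (2, -a.2.1)
  else if a.2.2.1 < a.1.2.1 then toLex (3, -a.2.2.1)
  else if a.1.2.1 < a.2.2.1 then toLex (4, a.2.2.1)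
  else toLex (5, -a.2.2.2)

theorem arcRank_lt_of_mem_R1 {a b : Vtx × Vtx} {d : Vtx} (hab : b.1 = a.2)
    (ha : a ∈ R1 a.1 d) (hb : b ∈ R1 b.1 d) : arcRank a < arcRank b := by
  obtain ⟨⟨x, y, z⟩, w⟩ := a
  obtain ⟨v, ⟨x', y', z'⟩⟩ := b
  obtain rfl : v = w := hab
  obtain ⟨-, hA⟩ := ha
  obtain ⟨-, hB⟩ := hb
  obtain ⟨p, q, r⟩ := d
  dsimp only at hA hB
  -- In each of the 36 cases `omega` either refutes the turn or sees the rank increase.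
  rcases hA with
    ⟨_, _, _, rfl⟩ | ⟨_, _, rfl⟩ | ⟨_, _, _, rfl⟩ | ⟨_, _, rfl⟩ | ⟨_, _, _, rfl⟩ | ⟨_, rfl⟩ <;>
  rcases hB with
    ⟨_, _, _, hv⟩ | ⟨_, _, hv⟩ | ⟨_, _, _, hv⟩ | ⟨_, _, hv⟩ | ⟨_, _, _, hv⟩ | ⟨_, hv⟩ <;>
  simp only [northN, eastN, southN, westN, upN, downN, Prod.mk.injEq] at * <;>
  obtain ⟨rfl, rfl, rfl⟩ := hv <;>
  simp (disch := omega) only [arcRank, if_pos, if_neg, Prod.Lex.toLex_lt_toLex, true_and] <;>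
  omega

theorem arcRank_lt_of_directDep {L : ℕ} {m n : ℕ → ℕ} {a b : Vtx × Vtx}
    (h : directDep L m n R1 a b) : arcRank a < arcRank b :=
  let ⟨_, _, hab, _, _, ha, hb⟩ := h
  arcRank_lt_of_mem_R1 hab ha hb

theorem R1_CDG_acyclic_general (L : ℕ) (m n : ℕ → ℕ) :
    ¬ ∃ (k : ℕ) (a : ℕ → Vtx × Vtx), 0 < k ∧
      (∀ i, i + 1 < k → directDep L m n R1 (a i) (a (i + 1))) ∧
      directDep L m n R1 (a (k - 1)) (a 0) :=
  not_exists_closed_chain_of_map_lt arcRank fun _ _ => arcRank_lt_of_directDep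

/-- Theorem 1: the channel dependency graph of `R1` on the 3D mesh topology
digraph contains no directed cycle (hence, by Duato's theorem, `R1` is
deadlock-free). -/
theorem R1_CDG_acyclic (L : ℕ) (m n : ℕ → ℕ) (hL : 2 ≤ L)
    (hm2 : ∀ z, 1 ≤ z → z ≤ L → 2 ≤ m z)
    (hn2 : ∀ z, 1 ≤ z → z ≤ L → 2 ≤ n z)
    (hmMono : ∀ z, 1 ≤ z → z < L → m z ≤ m (z + 1))
    (hnMono : ∀ z, 1 ≤ z → z < L → n z ≤ n (z + 1)) :
    ¬ ∃ (k : ℕ) (a : ℕ → Vtx × Vtx), 0 < k ∧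
      (∀ i, i + 1 < k → directDep L m n R1 (a i) (a (i + 1))) ∧
      directDep L m n R1 (a (k - 1)) (a 0) :=
  R1_CDG_acyclic_general L m n
end

section
/- (Impossible turns of R2, Table 1) None of the following ordered pairs of cardinal directions is a possible turn according to R2: (north, east), (north, south), (north, west), (north, down), (east, west), (east, down), (south, north), (south, east), (south, west), (south, down), (west, east), (west, down), (up, north), (up, east), (up, south), (up, west), (up, down), and (down, up). In particular, if an arc b is direct dependent on an up arc a according to R2, then b is an up arc. -/
/-- Horizontal (Manhattan) distance between the xy-coordinates of two routers. -/
def hDist (v d : Vtx) : ℕ := Nat.dist v.1 d.1 + Nat.dist v.2.1 d.2.1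

/-- The routing function `R2` (ZXYZ routing) with rerouting layer `Lam` and
threshold function `Φ`. -/
def R2 (_Lam : ℕ) (Φ : ℕ → ℕ∞) (v d : Vtx) : Set (Vtx × Vtx) :=
  {a | a.1 = v ∧
    (((v.2.2 < d.2.2 ∨ (d.2.2 ≤ v.2.2 ∧ Φ v.2.2 < (hDist v d : ℕ∞))) ∧ a.2 = downN v) ∨
     (v ≠ d ∧ d.2.2 ≤ v.2.2 ∧ (hDist v d : ℕ∞) ≤ Φ v.2.2 ∧
       ((v.1 < d.1 ∧ a.2 = eastN v) ∨
        (d.1 < v.1 ∧ a.2 = westN v) ∨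
        (v.1 = d.1 ∧ d.2.1 < v.2.1 ∧ a.2 = northN v) ∨
        (v.1 = d.1 ∧ v.2.1 < d.2.1 ∧ a.2 = southN v) ∨
        (v.1 = d.1 ∧ v.2.1 = d.2.1 ∧ d.2.2 < v.2.2 ∧ a.2 = upN v))))}

/-!
Every arc that `R2` chooses towards a destination `d` leaves an invariant at its head: after a
north or south arc the head has `d`'s x-coordinate and has not overshot `d`'s row, after an east
(west) arc it has not overshot `d`'s column, after an up arc it lies in `d`'s column at or below
`d`'s layer, and after any arc other than a down arc it is still at or below `d`'s layer and
within the threshold, since horizontal steps shorten the horizontal distance and up steps are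
taken only at horizontal distance `0`. Each impossible turn would need, at the head, a routing
condition contradicting this invariant. For a down arc followed by an up arc, the tail of the
down arc would lie in `d`'s column at or below `d`'s layer, where `R2` never routes down.
-/

theorem not_possibleTurn_of {L : ℕ} {m n : ℕ → ℕ} {R : Vtx → Vtx → Set (Vtx × Vtx)}
    {f g : Vtx × Vtx → Prop}
    (h : ∀ a b d, a ∈ R a.1 d → b ∈ R a.2 d → f a → g b → False) :
    ¬ possibleTurn L m n R f g := by
  rintro ⟨a, b, hf, hg, -, -, hba, d, -, ha, hb⟩
  exact h a b d ha (hba ▸ hb) hf hg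

/-- Exactly the situation in which `R2` at `v` does not route down towards `d`. -/
def WithinThreshold (Φ : ℕ → ℕ∞) (v d : Vtx) : Prop :=
  d.2.2 ≤ v.2.2 ∧ (hDist v d : ℕ∞) ≤ Φ v.2.2

section WithinThreshold

variable {Φ : ℕ → ℕ∞} {v w d : Vtx}

theorem not_withinThreshold_iff :
    ¬ WithinThreshold Φ v d ↔ v.2.2 < d.2.2 ∨ (d.2.2 ≤ v.2.2 ∧ Φ v.2.2 < hDist v d) := by
  rw [WithinThreshold, not_and_or, not_le, not_le]
  rcases lt_or_ge v.2.2 d.2.2 with h | h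
  · simp [h]
  · simp [h, not_lt.mpr h]

theorem withinThreshold_of_eq_xy (hx : v.1 = d.1) (hy : v.2.1 = d.2.1) (hz : d.2.2 ≤ v.2.2) :
    WithinThreshold Φ v d := by
  have hd : hDist v d = 0 := by simp [hDist, hx, hy]
  exact ⟨hz, by simp [hd]⟩

theorem WithinThreshold.of_hDist_le (h : WithinThreshold Φ v d) (hz : w.2.2 = v.2.2)
    (hd : hDist w d ≤ hDist v d) : WithinThreshold Φ w d :=
  ⟨hz ▸ h.1, hz ▸ (Nat.cast_le.mpr hd).trans h.2⟩

end WithinThreshold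

namespace R2

variable {Lam : ℕ} {Φ : ℕ → ℕ∞} {v d : Vtx} {a : Vtx × Vtx}

theorem east_tail (ha : a ∈ R2 Lam Φ v d) (hf : dirEast a) : v.1 < d.1 := by
  rcases ha with ⟨rfl, ⟨-, h⟩ | ⟨-, -, -, ⟨hx, h⟩ | ⟨-, h⟩ | ⟨-, -, h⟩ | ⟨-, -, h⟩ | ⟨-, -, -, h⟩⟩⟩ <;>
    simp only [dirEast, h, downN, eastN, westN, northN, southN, upN] at hf <;> omega

theorem west_tail (ha : a ∈ R2 Lam Φ v d) (hf : dirWest a) : d.1 < v.1 := by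
  rcases ha with ⟨rfl, ⟨-, h⟩ | ⟨-, -, -, ⟨-, h⟩ | ⟨hx, h⟩ | ⟨-, -, h⟩ | ⟨-, -, h⟩ | ⟨-, -, -, h⟩⟩⟩ <;>
    simp only [dirWest, h, downN, eastN, westN, northN, southN, upN] at hf <;> omega

theorem north_tail (ha : a ∈ R2 Lam Φ v d) (hf : dirNorth a) : d.2.1 < v.2.1 := by
  rcases ha with ⟨rfl, ⟨-, h⟩ | ⟨-, -, -, ⟨-, h⟩ | ⟨-, h⟩ | ⟨-, hy, h⟩ | ⟨-, -, h⟩ | ⟨-, -, -, h⟩⟩⟩ <;>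
    simp only [dirNorth, h, downN, eastN, westN, northN, southN, upN] at hf <;> omega

theorem south_tail (ha : a ∈ R2 Lam Φ v d) (hf : dirSouth a) : v.2.1 < d.2.1 := by
  rcases ha with ⟨rfl, ⟨-, h⟩ | ⟨-, -, -, ⟨-, h⟩ | ⟨-, h⟩ | ⟨-, -, h⟩ | ⟨-, hy, h⟩ | ⟨-, -, -, h⟩⟩⟩ <;>
    simp only [dirSouth, h, downN, eastN, westN, northN, southN, upN] at hf <;> omega

theorem up_tail (ha : a ∈ R2 Lam Φ v d) (hf : dirUp a) :
    v.1 = d.1 ∧ v.2.1 = d.2.1 ∧ d.2.2 < v.2.2 := by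
  rcases ha with ⟨rfl, ⟨-, h⟩ | ⟨-, -, -, ⟨-, h⟩ | ⟨-, h⟩ | ⟨-, -, h⟩ | ⟨-, -, h⟩ | ⟨hx, hy, hz, h⟩⟩⟩ <;>
    simp only [dirUp, h, downN, eastN, westN, northN, southN, upN] at hf <;> omega

theorem down_tail (ha : a ∈ R2 Lam Φ v d) (hf : dirDown a) :
    ¬ WithinThreshold Φ v d ∧ a.2 = downN v := by
  rcases ha with ⟨rfl, ⟨hfar, h⟩ | ⟨-, -, -, ⟨-, h⟩ | ⟨-, h⟩ | ⟨-, -, h⟩ | ⟨-, -, h⟩ | ⟨-, -, -, h⟩⟩⟩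
  · exact ⟨not_withinThreshold_iff.mpr hfar, h⟩
  all_goals simp only [dirDown, h, eastN, westN, northN, southN, upN] at hf; omega

theorem east_head (ha : a ∈ R2 Lam Φ v d) (hf : dirEast a) : a.2.1 ≤ d.1 := by
  rcases ha with ⟨rfl, ⟨-, h⟩ | ⟨-, -, -, ⟨hx, h⟩ | ⟨-, h⟩ | ⟨-, -, h⟩ | ⟨-, -, h⟩ | ⟨-, -, -, h⟩⟩⟩ <;>
    simp only [dirEast, h, downN, eastN, westN, northN, southN, upN] at hf ⊢ <;> omega

theorem west_head (ha : a ∈ R2 Lam Φ v d) (hf : dirWest a) : d.1 ≤ a.2.1 := by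
  rcases ha with ⟨rfl, ⟨-, h⟩ | ⟨-, -, -, ⟨-, h⟩ | ⟨hx, h⟩ | ⟨-, -, h⟩ | ⟨-, -, h⟩ | ⟨-, -, -, h⟩⟩⟩ <;>
    simp only [dirWest, h, downN, eastN, westN, northN, southN, upN] at hf ⊢ <;> omega

theorem north_head (ha : a ∈ R2 Lam Φ v d) (hf : dirNorth a) :
    a.2.1 = d.1 ∧ d.2.1 ≤ a.2.2.1 := by
  rcases ha with ⟨rfl, ⟨-, h⟩ | ⟨-, -, -, ⟨-, h⟩ | ⟨-, h⟩ | ⟨hx, hy, h⟩ | ⟨-, -, h⟩ | ⟨-, -, -, h⟩⟩⟩ <;>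
    simp only [dirNorth, h, downN, eastN, westN, northN, southN, upN] at hf ⊢ <;> omega

theorem south_head (ha : a ∈ R2 Lam Φ v d) (hf : dirSouth a) :
    a.2.1 = d.1 ∧ a.2.2.1 ≤ d.2.1 := by
  rcases ha with ⟨rfl, ⟨-, h⟩ | ⟨-, -, -, ⟨-, h⟩ | ⟨-, h⟩ | ⟨-, -, h⟩ | ⟨hx, hy, h⟩ | ⟨-, -, -, h⟩⟩⟩ <;>
    simp only [dirSouth, h, downN, eastN, westN, northN, southN, upN] at hf ⊢ <;> omega

theorem up_head (ha : a ∈ R2 Lam Φ v d) (hf : dirUp a) :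
    a.2.1 = d.1 ∧ a.2.2.1 = d.2.1 ∧ d.2.2 ≤ a.2.2.2 := by
  rcases ha with ⟨rfl, ⟨-, h⟩ | ⟨-, -, -, ⟨-, h⟩ | ⟨-, h⟩ | ⟨-, -, h⟩ | ⟨-, -, h⟩ | ⟨hx, hy, hz, h⟩⟩⟩ <;>
    simp only [dirUp, h, downN, eastN, westN, northN, southN, upN] at hf ⊢ <;> omega

theorem withinThreshold_head (ha : a ∈ R2 Lam Φ v d) (hf : ¬ dirDown a) :
    WithinThreshold Φ a.2 d := by
  rcases ha with ⟨rfl, ⟨-, h⟩ | ⟨-, hz, hΦ, ⟨hx, h⟩ | ⟨hx, h⟩ | ⟨hx, hy, h⟩ | ⟨hx, hy, h⟩ | ⟨hx, hy, hz', h⟩⟩⟩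
  · exact absurd (by simp [dirDown, h, downN]) hf
  all_goals rw [h]
  any_goals
    refine WithinThreshold.of_hDist_le ⟨hz, hΦ⟩ rfl ?_
    simp only [hDist, Nat.dist, eastN, westN, northN, southN]
    omega
  exact withinThreshold_of_eq_xy hx hy (by simp only [upN]; omega)

theorem dirUp_of_eq_xy (ha : a ∈ R2 Lam Φ v d) (hx : v.1 = d.1) (hy : v.2.1 = d.2.1)
    (hz : d.2.2 ≤ v.2.2) : dirUp a := by
  rcases ha with ⟨rfl, ⟨hfar, -⟩ | ⟨-, -, -, ⟨hx', -⟩ | ⟨hx', -⟩ | ⟨-, hy', -⟩ | ⟨-, hy', -⟩ | ⟨-, -, hz', h⟩⟩⟩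
  · exact absurd (withinThreshold_of_eq_xy hx hy hz) (not_withinThreshold_iff.mpr hfar)
  any_goals omega
  simp only [dirUp, h, upN]; omega

end R2

namespace R2

variable {L : ℕ} {m n : ℕ → ℕ} {Lam : ℕ} {Φ : ℕ → ℕ∞}

theorem not_possibleTurn_down {f : Vtx × Vtx → Prop} (hf : ∀ a, f a → ¬ dirDown a) :
    ¬ possibleTurn L m n (R2 Lam Φ) f dirDown :=
  not_possibleTurn_of fun a _ _ ha hb hfa hgb =>
    (down_tail hb hgb).1 (withinThreshold_head ha (hf a hfa))

theorem not_possibleTurn_down_up : ¬ possibleTurn L m n (R2 Lam Φ) dirDown dirUp :=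
  not_possibleTurn_of fun _ _ _ ha hb hf hg => by
    obtain ⟨hfar, hdown⟩ := down_tail ha hf
    rw [hdown] at hb
    obtain ⟨hx, hy, hz⟩ := up_tail hb hg
    exact hfar (withinThreshold_of_eq_xy hx hy (Nat.lt_succ_iff.mp hz))

theorem dirUp_of_directDep_dirUp {a b : Vtx × Vtx} (hu : dirUp a)
    (hab : directDep L m n (R2 Lam Φ) a b) : dirUp b := by
  obtain ⟨-, -, hba, d, -, ha, hb⟩ := hab
  obtain ⟨hx, hy, hz⟩ := up_head ha hu
  exact dirUp_of_eq_xy (hba ▸ hb) hx hy hz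

theorem not_possibleTurn_up {g : Vtx × Vtx → Prop} (hg : ∀ b, g b → ¬ dirUp b) :
    ¬ possibleTurn L m n (R2 Lam Φ) dirUp g := by
  rintro ⟨a, b, hu, hgb, hab⟩
  exact hg b hgb (dirUp_of_directDep_dirUp hu hab)

end R2

theorem R2_impossible_turns_general (L : ℕ) (m n : ℕ → ℕ) (Lam : ℕ) (Φ : ℕ → ℕ∞) :
    ¬ possibleTurn L m n (R2 Lam Φ) dirNorth dirEast ∧
    ¬ possibleTurn L m n (R2 Lam Φ) dirNorth dirSouth ∧
    ¬ possibleTurn L m n (R2 Lam Φ) dirNorth dirWest ∧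
    ¬ possibleTurn L m n (R2 Lam Φ) dirNorth dirDown ∧
    ¬ possibleTurn L m n (R2 Lam Φ) dirEast dirWest ∧
    ¬ possibleTurn L m n (R2 Lam Φ) dirEast dirDown ∧
    ¬ possibleTurn L m n (R2 Lam Φ) dirSouth dirNorth ∧
    ¬ possibleTurn L m n (R2 Lam Φ) dirSouth dirEast ∧
    ¬ possibleTurn L m n (R2 Lam Φ) dirSouth dirWest ∧
    ¬ possibleTurn L m n (R2 Lam Φ) dirSouth dirDown ∧
    ¬ possibleTurn L m n (R2 Lam Φ) dirWest dirEast ∧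
    ¬ possibleTurn L m n (R2 Lam Φ) dirWest dirDown ∧
    ¬ possibleTurn L m n (R2 Lam Φ) dirUp dirNorth ∧
    ¬ possibleTurn L m n (R2 Lam Φ) dirUp dirEast ∧
    ¬ possibleTurn L m n (R2 Lam Φ) dirUp dirSouth ∧
    ¬ possibleTurn L m n (R2 Lam Φ) dirUp dirWest ∧
    ¬ possibleTurn L m n (R2 Lam Φ) dirUp dirDown ∧
    ¬ possibleTurn L m n (R2 Lam Φ) dirDown dirUp ∧
    (∀ a b : Vtx × Vtx, dirUp a → directDep L m n (R2 Lam Φ) a b → dirUp b) :=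
  ⟨not_possibleTurn_of fun _ _ _ ha hb hf hg => (R2.east_tail hb hg).ne (R2.north_head ha hf).1,
    not_possibleTurn_of fun _ _ _ ha hb hf hg =>
      (R2.south_tail hb hg).not_ge (R2.north_head ha hf).2,
    not_possibleTurn_of fun _ _ _ ha hb hf hg => (R2.west_tail hb hg).ne' (R2.north_head ha hf).1,
    R2.not_possibleTurn_down fun _ h => h.2.2.le.not_gt,
    not_possibleTurn_of fun _ _ _ ha hb hf hg => (R2.west_tail hb hg).not_ge (R2.east_head ha hf),
    R2.not_possibleTurn_down fun _ h => h.2.2.le.not_gt,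
    not_possibleTurn_of fun _ _ _ ha hb hf hg =>
      (R2.north_tail hb hg).not_ge (R2.south_head ha hf).2,
    not_possibleTurn_of fun _ _ _ ha hb hf hg => (R2.east_tail hb hg).ne (R2.south_head ha hf).1,
    not_possibleTurn_of fun _ _ _ ha hb hf hg => (R2.west_tail hb hg).ne' (R2.south_head ha hf).1,
    R2.not_possibleTurn_down fun _ h => h.2.2.le.not_gt,
    not_possibleTurn_of fun _ _ _ ha hb hf hg => (R2.east_tail hb hg).not_ge (R2.west_head ha hf),
    R2.not_possibleTurn_down fun _ h => h.2.2.le.not_gt,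
    R2.not_possibleTurn_up fun _ h => h.2.2.ge.not_gt,
    R2.not_possibleTurn_up fun _ h => h.2.2.ge.not_gt,
    R2.not_possibleTurn_up fun _ h => h.2.2.ge.not_gt,
    R2.not_possibleTurn_up fun _ h => h.2.2.ge.not_gt,
    R2.not_possibleTurn_up fun _ h => h.not_gt,
    R2.not_possibleTurn_down_up,
    fun _ _ => R2.dirUp_of_directDep_dirUp⟩

/-- Impossible turns of `R2` (Table 1): none of the listed 18 ordered pairs of
cardinal directions is a possible turn according to `R2`; in particular any arc
direct dependent on an up arc is itself an up arc. -/
theorem R2_impossible_turns (L : ℕ) (m n : ℕ → ℕ) (hL : 2 ≤ L)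
    (hm2 : ∀ z, 1 ≤ z → z ≤ L → 2 ≤ m z)
    (hn2 : ∀ z, 1 ≤ z → z ≤ L → 2 ≤ n z)
    (hmMono : ∀ z, 1 ≤ z → z < L → m z ≤ m (z + 1))
    (hnMono : ∀ z, 1 ≤ z → z < L → n z ≤ n (z + 1))
    (Lam : ℕ) (hLam1 : 1 ≤ Lam) (hLam2 : Lam ≤ L)
    (Φ : ℕ → ℕ∞)
    (hΦ : ∃ c : ℕ, (∀ z, 1 ≤ z → z < Lam → Φ z = (c : ℕ∞)) ∧
      (∀ z, Lam ≤ z → z ≤ L → Φ z = ⊤)) :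
    ¬ possibleTurn L m n (R2 Lam Φ) dirNorth dirEast ∧
    ¬ possibleTurn L m n (R2 Lam Φ) dirNorth dirSouth ∧
    ¬ possibleTurn L m n (R2 Lam Φ) dirNorth dirWest ∧
    ¬ possibleTurn L m n (R2 Lam Φ) dirNorth dirDown ∧
    ¬ possibleTurn L m n (R2 Lam Φ) dirEast dirWest ∧
    ¬ possibleTurn L m n (R2 Lam Φ) dirEast dirDown ∧
    ¬ possibleTurn L m n (R2 Lam Φ) dirSouth dirNorth ∧
    ¬ possibleTurn L m n (R2 Lam Φ) dirSouth dirEast ∧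
    ¬ possibleTurn L m n (R2 Lam Φ) dirSouth dirWest ∧
    ¬ possibleTurn L m n (R2 Lam Φ) dirSouth dirDown ∧
    ¬ possibleTurn L m n (R2 Lam Φ) dirWest dirEast ∧
    ¬ possibleTurn L m n (R2 Lam Φ) dirWest dirDown ∧
    ¬ possibleTurn L m n (R2 Lam Φ) dirUp dirNorth ∧
    ¬ possibleTurn L m n (R2 Lam Φ) dirUp dirEast ∧
    ¬ possibleTurn L m n (R2 Lam Φ) dirUp dirSouth ∧
    ¬ possibleTurn L m n (R2 Lam Φ) dirUp dirWest ∧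
    ¬ possibleTurn L m n (R2 Lam Φ) dirUp dirDown ∧
    ¬ possibleTurn L m n (R2 Lam Φ) dirDown dirUp ∧
    (∀ a b : Vtx × Vtx, dirUp a → directDep L m n (R2 Lam Φ) a b → dirUp b) :=
  R2_impossible_turns_general L m n Lam Φ
end

section
/- (Descent lemma for R2, Case 2.1) Suppose R2 prescribes a down arc at v toward destination d because v_z ≥ d_z and |v_x − d_x| + |v_y − d_y| > Φ(v_z). Then along the route generated by R2 from v toward d, every subsequent router w with w_z < Λ again satisfies the threshold condition and R2(w, d) prescribes the down arc; consequently the route descends vertically (keeping the same x- and y-coordinates) until it reaches layer Λ. -/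
/- Below `Lam` the threshold is one finite constant and vertical moves do not change the
horizontal distance to `d`, so the condition `Φ z < hDist` that forced the first down arc
holds again at every router of the column, until layer `Lam` is reached. -/

theorem hDist_self (v : Vtx) : hDist v v = 0 := by
  simp [hDist]

theorem ne_of_lt_hDist {v d : Vtx} {t : ℕ∞} (h : t < (hDist v d : ℕ∞)) : v ≠ d := by
  rintro rfl
  simp [hDist_self] at h

theorem R2_eq_down_of_lt_hDist (Lam : ℕ) (Φ : ℕ → ℕ∞) {v d : Vtx}
    (h : Φ v.2.2 < (hDist v d : ℕ∞)) : R2 Lam Φ v d = {(v, downN v)} := by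
  ext ⟨a₁, a₂⟩
  simp only [R2, Set.mem_ofPred_eq, Set.mem_singleton_iff, Prod.mk.injEq, not_le.mpr h,
    false_and, and_false, or_false]
  constructor
  · rintro ⟨rfl, -, rfl⟩
    exact ⟨rfl, rfl⟩
  · rintro ⟨rfl, rfl⟩
    exact ⟨rfl, (lt_or_ge _ _).imp_right fun hz => ⟨hz, h⟩, rfl⟩

theorem route_step_eq_downN {Lam : ℕ} {Φ : ℕ → ℕ∞} {d u w : Vtx}
    (hstep : u ≠ d → (u, w) ∈ R2 Lam Φ u d) (h : Φ u.2.2 < (hDist u d : ℕ∞)) :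
    w = downN u := by
  have hmem := hstep (ne_of_lt_hDist h)
  rw [R2_eq_down_of_lt_hDist Lam Φ h, Set.mem_singleton_iff, Prod.mk.injEq] at hmem
  exact hmem.2

theorem route_descends_column {Lam : ℕ} {Φ : ℕ → ℕ∞} {v d : Vtx} {p : ℕ → Vtx}
    (hthr : ∀ i, v.2.2 + i < Lam → Φ (v.2.2 + i) < (hDist v d : ℕ∞)) (hp0 : p 0 = v)
    (hstep : ∀ i, p i ≠ d → (p i, p (i + 1)) ∈ R2 Lam Φ (p i) d) :
    ∀ i, v.2.2 + i ≤ Lam → p i = (v.1, v.2.1, v.2.2 + i) := by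
  intro i
  induction i with
  | zero => intro _; exact hp0
  | succ i ih =>
    intro hi
    have hpi := ih (by omega)
    rw [route_step_eq_downN (hstep i) (by rw [hpi]; exact hthr i (by omega)), hpi]
    rfl

theorem R2_descends_to_Lam_general (L : ℕ) (m n : ℕ → ℕ) (Lam : ℕ) (Φ : ℕ → ℕ∞)
    (hΦ : ∃ c : ℕ, (∀ z, 1 ≤ z → z < Lam → Φ z = (c : ℕ∞)) ∧
      (∀ z, Lam ≤ z → z ≤ L → Φ z = ⊤))
    (v d : Vtx) (hv : memV L m n v)
    (hthr : Φ v.2.2 < (hDist v d : ℕ∞))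
    (p : ℕ → Vtx) (hp0 : p 0 = v)
    (hstep : ∀ i, p i ≠ d → (p i, p (i + 1)) ∈ R2 Lam Φ (p i) d) :
    (∀ i, v.2.2 + i ≤ Lam → p i = (v.1, v.2.1, v.2.2 + i)) ∧
    (∀ i, v.2.2 + i < Lam →
      Φ ((p i).2.2) < (hDist (p i) d : ℕ∞) ∧
      R2 Lam Φ (p i) d = {(p i, downN (p i))}) := by
  obtain ⟨c, hconst, -⟩ := hΦ
  have hthr_column : ∀ i, v.2.2 + i < Lam → Φ (v.2.2 + i) < (hDist v d : ℕ∞) := by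
    intro i hi
    have hvz : 1 ≤ v.2.2 := hv.2.2.2.2.1
    rwa [hconst _ (by omega) hi, ← hconst _ hvz (by omega)]
  have hcolumn := route_descends_column hthr_column hp0 hstep
  refine ⟨hcolumn, fun i hi => ?_⟩
  have hthr_i : Φ (p i).2.2 < (hDist (p i) d : ℕ∞) := by
    rw [hcolumn i hi.le]
    exact hthr_column i hi
  exact ⟨hthr_i, R2_eq_down_of_lt_hDist Lam Φ hthr_i⟩

/-- Descent lemma for `R2` (Case 2.1): if `R2` prescribes a down arc at `v`
toward `d` because `v_z ≥ d_z` and the horizontal distance exceeds the threshold,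
then along the route generated by `R2` every subsequent router strictly above layer
`Lam` again satisfies the threshold condition and is prescribed the down arc;
consequently the route descends vertically (same x- and y-coordinates) until it
reaches layer `Lam`. -/
theorem R2_descends_to_Lam (L : ℕ) (m n : ℕ → ℕ) (hL : 2 ≤ L)
    (hm2 : ∀ z, 1 ≤ z → z ≤ L → 2 ≤ m z)
    (hn2 : ∀ z, 1 ≤ z → z ≤ L → 2 ≤ n z)
    (hmMono : ∀ z, 1 ≤ z → z < L → m z ≤ m (z + 1))
    (hnMono : ∀ z, 1 ≤ z → z < L → n z ≤ n (z + 1))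
    (Lam : ℕ) (hLam1 : 1 ≤ Lam) (hLam2 : Lam ≤ L)
    (Φ : ℕ → ℕ∞)
    (hΦ : ∃ c : ℕ, (∀ z, 1 ≤ z → z < Lam → Φ z = (c : ℕ∞)) ∧
      (∀ z, Lam ≤ z → z ≤ L → Φ z = ⊤))
    (v d : Vtx) (hv : memV L m n v) (hd : memV L m n d)
    (hzd : d.2.2 ≤ v.2.2) (hthr : Φ v.2.2 < (hDist v d : ℕ∞))
    (p : ℕ → Vtx) (hp0 : p 0 = v)
    (hstep : ∀ i, p i ≠ d → (p i, p (i + 1)) ∈ R2 Lam Φ (p i) d) :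
    (∀ i, v.2.2 + i ≤ Lam → p i = (v.1, v.2.1, v.2.2 + i)) ∧
    (∀ i, v.2.2 + i < Lam →
      Φ ((p i).2.2) < (hDist (p i) d : ℕ∞) ∧
      R2 Lam Φ (p i) d = {(p i, downN (p i))}) :=
  R2_descends_to_Lam_general L m n Lam Φ hΦ v d hv hthr p hp0 hstep
end

section
/- (Lemma 4) The routing function R2 is connected: for every pair of routers s, d ∈ V there exists a directed path v_1 = s, v_2, …, v_k = d in the 3D mesh topology digraph T such that each arc (v_i, v_{i+1}) belongs to R2(v_i, d). -/
/-!
Follow R2 from any vertex and watch the potential `routeMeasure`. While R2 sends the packet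
down, its horizontal distance to `d` is constant and its layer index grows; this can only
happen in layers `z < L`, since `Φ L = ∞`. Once R2 stops sending it down, every horizontal
step shortens the horizontal distance (so the threshold test keeps passing) and every up step,
taken only above `d`, lowers the height above `d`'s layer. As the grids only grow with the
layer index, each vertex reached stays in `V`, so the path ends at `d`.
-/

theorem exists_path_of_exists_step_lt {α : Type*} {S : α → Prop} {r : α → α → Prop}
    (μ : α → ℕ) (d : α) (hstep : ∀ v, S v → v ≠ d → ∃ w, S w ∧ r v w ∧ μ w < μ v)
    (s : α) (hs : S s) :
    ∃ (k : ℕ) (p : ℕ → α), p 0 = s ∧ p k = d ∧ ∀ i < k, r (p i) (p (i + 1)) := by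
  induction hμ : μ s using Nat.strong_induction_on generalizing s with
  | _ N ih =>
    by_cases hsd : s = d
    · exact ⟨0, fun _ => s, rfl, hsd, by simp⟩
    obtain ⟨w, hw, hsw, hlt⟩ := hstep s hs hsd
    obtain ⟨k, p, hp0, hpk, hp⟩ := ih (μ w) (hμ ▸ hlt) w hw rfl
    refine ⟨k + 1, fun | 0 => s | i + 1 => p i, rfl, hpk, ?_⟩
    rintro (_ | i) hi
    · simpa [hp0] using hsw
    · exact hp i (by omega)

section R2

variable {L : ℕ} {m n : ℕ → ℕ} {Lam : ℕ} {Φ : ℕ → ℕ∞} {v d : Vtx}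

def RoutesDown (Φ : ℕ → ℕ∞) (v d : Vtx) : Prop :=
  v.2.2 < d.2.2 ∨ (d.2.2 ≤ v.2.2 ∧ Φ v.2.2 < (hDist v d : ℕ∞))

theorem not_routesDown_iff :
    ¬RoutesDown Φ v d ↔ d.2.2 ≤ v.2.2 ∧ (hDist v d : ℕ∞) ≤ Φ v.2.2 := by
  rw [RoutesDown, not_or, not_and, not_lt, not_lt]
  exact ⟨fun h => ⟨h.1, h.2 h.1⟩, fun h => ⟨h.1, fun _ => h.2⟩⟩

theorem RoutesDown.layer_lt (hΦL : Φ L = ⊤) (hdL : d.2.2 ≤ L) (hvL : v.2.2 ≤ L)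
    (h : RoutesDown Φ v d) : v.2.2 < L := by
  rcases h with h | ⟨-, h⟩
  · omega
  · refine lt_of_le_of_ne hvL fun hv => ?_
    rw [hv, hΦL] at h
    exact not_top_lt h

/-- While a packet descends its horizontal distance is unchanged, and afterwards at most `L`
vertical steps remain, so the offset `L + 1` makes every descending vertex cost more than any
vertex reached after the descent. -/
noncomputable def routeMeasure (L : ℕ) (Φ : ℕ → ℕ∞) (d v : Vtx) : ℕ :=
  open scoped Classical in
  hDist v d + if RoutesDown Φ v d then L + 1 + (L - v.2.2) else v.2.2 - d.2.2

theorem routeMeasure_downN_lt (h : RoutesDown Φ v d) (hvL : v.2.2 < L) :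
    routeMeasure L Φ d (downN v) < routeMeasure L Φ d v := by
  have hdist : hDist (downN v) d = hDist v d := rfl
  unfold routeMeasure
  rw [hdist, if_pos h]
  split_ifs <;> simp only [downN] <;> omega

theorem routeMeasure_lt_of_hDist_lt {w : Vtx} (h : ¬RoutesDown Φ v d) (hz : w.2.2 = v.2.2)
    (hlt : hDist w d < hDist v d) : routeMeasure L Φ d w < routeMeasure L Φ d v := by
  rw [not_routesDown_iff] at h
  have hw : ¬RoutesDown Φ w d :=
    not_routesDown_iff.2 ⟨hz ▸ h.1, hz ▸ (Nat.cast_le.2 hlt.le).trans h.2⟩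
  simp only [routeMeasure, if_neg hw, if_neg (not_routesDown_iff.2 h), hz]
  omega

theorem routeMeasure_upN_lt (h0 : hDist v d = 0) (hz : d.2.2 < v.2.2) :
    routeMeasure L Φ d (upN v) < routeMeasure L Φ d v := by
  have h0' : hDist (upN v) d = 0 := h0
  have hup : ¬RoutesDown Φ (upN v) d :=
    not_routesDown_iff.2 ⟨by simp only [upN]; omega, by simp [h0']⟩
  have hv : ¬RoutesDown Φ v d := not_routesDown_iff.2 ⟨hz.le, by simp [h0]⟩
  rw [routeMeasure, routeMeasure, if_neg hup, if_neg hv, h0', h0]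
  simp only [upN]
  omega

theorem memV_of_layer_le_s12 (hmMono : MonotoneOn m (Set.Icc 1 L))
    (hnMono : MonotoneOn n (Set.Icc 1 L)) (hd : memV L m n d) {z : ℕ} (hz : d.2.2 ≤ z)
    (hzL : z ≤ L) : memV L m n (d.1, d.2.1, z) := by
  obtain ⟨hx1, hxn, hy1, hym, hz1, hdL⟩ := hd
  have hdz : d.2.2 ∈ Set.Icc 1 L := ⟨hz1, hdL⟩
  have hzI : z ∈ Set.Icc 1 L := ⟨hz1.trans hz, hzL⟩
  exact ⟨hx1, hxn.trans (hnMono hdz hzI hz), hy1, hym.trans (hmMono hdz hzI hz), hzI.1, hzI.2⟩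

theorem exists_R2_step_of_not_routesDown (hmMono : MonotoneOn m (Set.Icc 1 L))
    (hnMono : MonotoneOn n (Set.Icc 1 L)) (hv : memV L m n v) (hd : memV L m n d)
    (hdown : ¬RoutesDown Φ v d) (hne : v ≠ d) :
    ∃ w, inA L m n (v, w) ∧ (v, w) ∈ R2 Lam Φ v d ∧
      routeMeasure L Φ d w < routeMeasure L Φ d v := by
  obtain ⟨hzd, hΦ⟩ := not_routesDown_iff.1 hdown
  obtain ⟨hx1, hxn, hy1, hym, hz1, hzL⟩ := id hv
  obtain ⟨hdx1, -, hdy1, -⟩ := id hd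
  have hproj := memV_of_layer_le_s12 hmMono hnMono hd hzd hzL
  have hdn : d.1 ≤ n v.2.2 := hproj.2.1
  have hdm : d.2.1 ≤ m v.2.2 := hproj.2.2.2.1
  rcases lt_trichotomy v.1 d.1 with hx | hx | hx
  · refine ⟨eastN v, ⟨hv, ?_, ?_⟩, ⟨rfl, .inr ⟨hne, hzd, hΦ, .inl ⟨hx, rfl⟩⟩⟩,
      routeMeasure_lt_of_hDist_lt hdown rfl ?_⟩ <;>
    simp only [memV, eastN, hDist, Nat.dist, and_true, true_and, true_or] <;> omega
  · rcases lt_trichotomy v.2.1 d.2.1 with hy | hy | hy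
    · refine ⟨southN v, ⟨hv, ?_, ?_⟩,
        ⟨rfl, .inr ⟨hne, hzd, hΦ, .inr (.inr (.inr (.inl ⟨hx, hy, rfl⟩)))⟩⟩,
        routeMeasure_lt_of_hDist_lt hdown rfl ?_⟩ <;>
      simp only [memV, southN, hDist, Nat.dist, and_true, true_and, true_or, or_true] <;> omega
    · have hz : d.2.2 < v.2.2 :=
        lt_of_le_of_ne hzd fun hz => hne (Prod.ext hx (Prod.ext hy hz.symm))
      have hup : upN v = (d.1, d.2.1, v.2.2 - 1) := by rw [upN, hx, hy]
      refine ⟨upN v, ⟨hv, ?_, ?_⟩,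
        ⟨rfl, .inr ⟨hne, hzd, hΦ, .inr (.inr (.inr (.inr ⟨hx, hy, hz, rfl⟩)))⟩⟩,
        routeMeasure_upN_lt (by simp [hDist, hx, hy]) hz⟩
      · exact hup ▸ memV_of_layer_le_s12 hmMono hnMono hd (by omega) (by omega)
      · simp only [upN, true_and]
        omega
    · refine ⟨northN v, ⟨hv, ?_, ?_⟩,
        ⟨rfl, .inr ⟨hne, hzd, hΦ, .inr (.inr (.inl ⟨hx, hy, rfl⟩))⟩⟩,
        routeMeasure_lt_of_hDist_lt hdown rfl ?_⟩ <;>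
      simp only [memV, northN, hDist, Nat.dist, and_true, true_and] <;> omega
  · refine ⟨westN v, ⟨hv, ?_, ?_⟩, ⟨rfl, .inr ⟨hne, hzd, hΦ, .inr (.inl ⟨hx, rfl⟩)⟩⟩,
      routeMeasure_lt_of_hDist_lt hdown rfl ?_⟩ <;>
    simp only [memV, westN, hDist, Nat.dist, and_true, true_and] <;> omega

theorem exists_R2_step (hmMono : MonotoneOn m (Set.Icc 1 L))
    (hnMono : MonotoneOn n (Set.Icc 1 L)) (hΦL : Φ L = ⊤) (hv : memV L m n v)
    (hd : memV L m n d) (hne : v ≠ d) :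
    ∃ w, inA L m n (v, w) ∧ (v, w) ∈ R2 Lam Φ v d ∧
      routeMeasure L Φ d w < routeMeasure L Φ d v := by
  by_cases hdown : RoutesDown Φ v d
  · have hvL := hdown.layer_lt hΦL hd.2.2.2.2.2 hv.2.2.2.2.2
    exact ⟨downN v, ⟨hv, memV_of_layer_le_s12 hmMono hnMono hv (by omega) hvL, by simp [downN]⟩,
      ⟨rfl, .inl ⟨hdown, rfl⟩⟩, routeMeasure_downN_lt hdown hvL⟩
  · exact exists_R2_step_of_not_routesDown hmMono hnMono hv hd hdown hne

end R2

theorem R2_connected_general (L : ℕ) (m n : ℕ → ℕ)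
    (hmMono : ∀ z, 1 ≤ z → z < L → m z ≤ m (z + 1))
    (hnMono : ∀ z, 1 ≤ z → z < L → n z ≤ n (z + 1))
    (Lam : ℕ) (hLam2 : Lam ≤ L)
    (Φ : ℕ → ℕ∞)
    (hΦ : ∃ c : ℕ, (∀ z, 1 ≤ z → z < Lam → Φ z = (c : ℕ∞)) ∧
      (∀ z, Lam ≤ z → z ≤ L → Φ z = ⊤))
    (s d : Vtx) (hs : memV L m n s) (hd : memV L m n d) :
    ∃ (k : ℕ) (p : ℕ → Vtx), p 0 = s ∧ p k = d ∧
      ∀ i < k, inA L m n (p i, p (i + 1)) ∧ (p i, p (i + 1)) ∈ R2 Lam Φ (p i) d := by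
  obtain ⟨-, -, hΦtop⟩ := hΦ
  have monotoneOn_of_succ {f : ℕ → ℕ} (h : ∀ z, 1 ≤ z → z < L → f z ≤ f (z + 1)) :
      MonotoneOn f (Set.Icc 1 L) :=
    monotoneOn_of_le_add_one Set.ordConnected_Icc fun z _ hz hz1 => h z hz.1 hz1.2
  refine exists_path_of_exists_step_lt (S := memV L m n)
    (r := fun v w => inA L m n (v, w) ∧ (v, w) ∈ R2 Lam Φ v d)
    (routeMeasure L Φ d) d (fun v hv hne => ?_) s hs
  obtain ⟨w, hA, hR, hlt⟩ := exists_R2_step (monotoneOn_of_succ hmMono)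
    (monotoneOn_of_succ hnMono) (hΦtop L hLam2 le_rfl) hv hd hne
  exact ⟨w, hA.2.1, ⟨hA, hR⟩, hlt⟩

/-- Lemma 4: the routing function `R2` is connected: for every pair of routers
`s, d ∈ V` there is a directed path in the topology digraph from `s` to `d`
each of whose arcs is delivered by `R2` (toward `d`). -/
theorem R2_connected (L : ℕ) (m n : ℕ → ℕ) (hL : 2 ≤ L)
    (hm2 : ∀ z, 1 ≤ z → z ≤ L → 2 ≤ m z)
    (hn2 : ∀ z, 1 ≤ z → z ≤ L → 2 ≤ n z)
    (hmMono : ∀ z, 1 ≤ z → z < L → m z ≤ m (z + 1))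
    (hnMono : ∀ z, 1 ≤ z → z < L → n z ≤ n (z + 1))
    (Lam : ℕ) (hLam1 : 1 ≤ Lam) (hLam2 : Lam ≤ L)
    (Φ : ℕ → ℕ∞)
    (hΦ : ∃ c : ℕ, (∀ z, 1 ≤ z → z < Lam → Φ z = (c : ℕ∞)) ∧
      (∀ z, Lam ≤ z → z ≤ L → Φ z = ⊤))
    (s d : Vtx) (hs : memV L m n s) (hd : memV L m n d) :
    ∃ (k : ℕ) (p : ℕ → Vtx), p 0 = s ∧ p k = d ∧
      ∀ i < k, inA L m n (p i, p (i + 1)) ∧ (p i, p (i + 1)) ∈ R2 Lam Φ (p i) d :=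
  R2_connected_general L m n hmMono hnMono Lam hLam2 Φ hΦ s d hs hd
end

section
/- (Theorem 4 for R2: livelock-freedom) For all s, d ∈ V, the route generated by R2 from s toward d — the sequence v_0 = s and v_{i+1} = head of the unique arc in R2(v_i, d) — reaches d after at most |s_x − d_x| + |s_y − d_y| + 2(ℓ − 1) steps; in particular every packet routed by R2 reaches its destination after finitely many hops. -/
/-!
Every hop of `R2` decreases the potential `R2Potential Lam d v`: the horizontal distance, plus
the number of layers still to climb, plus, unless the packet is already at or beneath `d` with
no horizontal distance left, twice the number of layers it may still descend. Forced descents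
stop at layer `Lam`, from where on the threshold is `∞`, so a packet never goes deeper than
`max d_z Lam`. At the source the potential is at most `hDist s d + 2 (L - 1)`.
-/

theorem exists_le_eq_of_potential_lt {α : Type*} {S : Set α} {f : α → ℕ} {d : α} {p : ℕ → α}
    (hstep : ∀ i, p i ∈ S → p i ≠ d → p (i + 1) ∈ S ∧ f (p (i + 1)) < f (p i))
    (h0 : p 0 ∈ S) : ∃ k ≤ f (p 0), p k = d := by
  induction hn : f (p 0) using Nat.strong_induction_on generalizing p with
  | _ n ih =>
    by_cases hd : p 0 = d
    · exact ⟨0, Nat.zero_le _, hd⟩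
    obtain ⟨h1, hlt⟩ := hstep 0 h0 hd
    obtain ⟨k, hk, hpk⟩ :=
      ih _ (hn ▸ hlt) (p := fun i => p (i + 1)) (fun i => hstep (i + 1)) h1 rfl
    exact ⟨k + 1, by omega, hpk⟩

def R2Potential (Lam : ℕ) (d v : Vtx) : ℕ :=
  hDist v d + (v.2.2 - d.2.2) +
    if hDist v d = 0 ∧ d.2.2 ≤ v.2.2 then 0 else 2 * (max d.2.2 Lam - v.2.2)

lemma hDist_downN (v d : Vtx) : hDist (downN v) d = hDist v d := rfl

lemma hDist_upN (v d : Vtx) : hDist (upN v) d = hDist v d := rfl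

section R2Hop

variable {L Lam : ℕ} {Φ : ℕ → ℕ∞} {v w d : Vtx}

lemma layer_lt_of_threshold_lt (hΦtop : ∀ z, Lam ≤ z → z ≤ L → Φ z = ⊤) (hvL : v.2.2 ≤ L)
    (hΦ : Φ v.2.2 < (hDist v d : ℕ∞)) : v.2.2 < Lam := by
  by_contra! hLam
  simp [hΦtop _ hLam hvL] at hΦ

lemma R2_hop_cases (hΦtop : ∀ z, Lam ≤ z → z ≤ L → Φ z = ⊤) (hvL : v.2.2 ≤ L)
    (h : (v, w) ∈ R2 Lam Φ v d) :
    (w = downN v ∧ (v.2.2 < d.2.2 ∨ (hDist v d ≠ 0 ∧ v.2.2 < Lam))) ∨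
    (w.2.2 = v.2.2 ∧ d.2.2 ≤ v.2.2 ∧ hDist w d + 1 = hDist v d) ∨
    (w = upN v ∧ hDist v d = 0 ∧ d.2.2 < v.2.2) := by
  obtain ⟨-, ⟨hbelow | ⟨-, hΦ⟩, hw⟩ | ⟨-, hzd, -, hdir⟩⟩ := h
  · exact Or.inl ⟨hw, Or.inl hbelow⟩
  · exact Or.inl ⟨hw, Or.inr
      ⟨fun h0 => by simp [h0] at hΦ, layer_lt_of_threshold_lt hΦtop hvL hΦ⟩⟩
  rcases hdir with ⟨hx, rfl⟩ | ⟨hx, rfl⟩ | ⟨hx, hy, rfl⟩ | ⟨hx, hy, rfl⟩ | ⟨hx, hy, hz, rfl⟩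
  on_goal 5 => exact Or.inr (Or.inr ⟨rfl, by simp [hDist, hx, hy], hz⟩)
  all_goals
    refine Or.inr (Or.inl ⟨rfl, hzd, ?_⟩)
    simp only [eastN, westN, northN, southN, hDist, Nat.dist]
    omega

lemma R2_hop_layer_le (hΦtop : ∀ z, Lam ≤ z → z ≤ L → Φ z = ⊤) (hLam : Lam ≤ L)
    (hdL : d.2.2 ≤ L) (hvL : v.2.2 ≤ L) (h : (v, w) ∈ R2 Lam Φ v d) : w.2.2 ≤ L := by
  rcases R2_hop_cases hΦtop hvL h with ⟨rfl, hz⟩ | ⟨hz, -⟩ | ⟨rfl, -⟩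
  · simp only [downN]; omega
  · omega
  · simp only [upN]; omega

lemma R2Potential_lt_of_hop (hΦtop : ∀ z, Lam ≤ z → z ≤ L → Φ z = ⊤) (hvL : v.2.2 ≤ L)
    (h : (v, w) ∈ R2 Lam Φ v d) : R2Potential Lam d w < R2Potential Lam d v := by
  have hdLam : d.2.2 ≤ max d.2.2 Lam := le_max_left _ _
  have hLamLam : Lam ≤ max d.2.2 Lam := le_max_right _ _
  unfold R2Potential
  rcases R2_hop_cases hΦtop hvL h with ⟨rfl, hz⟩ | ⟨hz, hzd, hdist⟩ | ⟨rfl, hdist, hzd⟩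
  · rw [hDist_downN]
    split_ifs <;> simp only [downN] at * <;> omega
  · split_ifs <;> omega
  · rw [hDist_upN]
    split_ifs <;> simp only [upN] at * <;> omega

lemma R2Potential_le {s : Vtx} (hLam : Lam ≤ L) (hs : 1 ≤ s.2.2) (hsL : s.2.2 ≤ L)
    (hd : 1 ≤ d.2.2) (hdL : d.2.2 ≤ L) : R2Potential Lam d s ≤ hDist s d + 2 * (L - 1) := by
  have hdLam : d.2.2 ≤ max d.2.2 Lam := le_max_left _ _
  have hLamL : max d.2.2 Lam ≤ L := max_le hdL hLam
  unfold R2Potential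
  split_ifs <;> omega

end R2Hop

theorem R2_livelock_free_general (L : ℕ) (m n : ℕ → ℕ)
    (Lam : ℕ) (hLam2 : Lam ≤ L)
    (Φ : ℕ → ℕ∞)
    (hΦ : ∃ c : ℕ, (∀ z, 1 ≤ z → z < Lam → Φ z = (c : ℕ∞)) ∧
      (∀ z, Lam ≤ z → z ≤ L → Φ z = ⊤))
    (s d : Vtx) (hs : memV L m n s) (hd : memV L m n d)
    (p : ℕ → Vtx) (hp0 : p 0 = s)
    (hstep : ∀ i, p i ≠ d → (p i, p (i + 1)) ∈ R2 Lam Φ (p i) d) :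
    ∃ k, k ≤ hDist s d + 2 * (L - 1) ∧ p k = d := by
  obtain ⟨_, -, hΦtop⟩ := hΦ
  obtain ⟨-, -, -, -, hs1, hsL⟩ := hs
  obtain ⟨-, -, -, -, hd1, hdL⟩ := hd
  subst hp0
  obtain ⟨k, hk, hpk⟩ := exists_le_eq_of_potential_lt (S := {v : Vtx | v.2.2 ≤ L})
    (f := R2Potential Lam d) (p := p)
    (fun i hiL hne => ⟨R2_hop_layer_le hΦtop hLam2 hdL hiL (hstep i hne),
      R2Potential_lt_of_hop hΦtop hiL (hstep i hne)⟩) hsL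
  exact ⟨k, hk.trans (R2Potential_le hLam2 hs1 hsL hd1 hdL), hpk⟩

/-- Theorem 4 for `R2` (livelock freedom): the route generated by `R2` from
`s` toward `d` reaches `d` after at most
`|s_x − d_x| + |s_y − d_y| + 2(L − 1)` steps. -/
theorem R2_livelock_free (L : ℕ) (m n : ℕ → ℕ) (hL : 2 ≤ L)
    (hm2 : ∀ z, 1 ≤ z → z ≤ L → 2 ≤ m z)
    (hn2 : ∀ z, 1 ≤ z → z ≤ L → 2 ≤ n z)
    (hmMono : ∀ z, 1 ≤ z → z < L → m z ≤ m (z + 1))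
    (hnMono : ∀ z, 1 ≤ z → z < L → n z ≤ n (z + 1))
    (Lam : ℕ) (hLam1 : 1 ≤ Lam) (hLam2 : Lam ≤ L)
    (Φ : ℕ → ℕ∞)
    (hΦ : ∃ c : ℕ, (∀ z, 1 ≤ z → z < Lam → Φ z = (c : ℕ∞)) ∧
      (∀ z, Lam ≤ z → z ≤ L → Φ z = ⊤))
    (s d : Vtx) (hs : memV L m n s) (hd : memV L m n d)
    (p : ℕ → Vtx) (hp0 : p 0 = s)
    (hstep : ∀ i, p i ≠ d → (p i, p (i + 1)) ∈ R2 Lam Φ (p i) d) :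
    ∃ k, k ≤ hDist s d + 2 * (L - 1) ∧ p k = d :=
  R2_livelock_free_general L m n Lam hLam2 Φ hΦ s d hs hd p hp0 hstep
end

section
/- (Monotonicity along R1 routes, Cases 3 and 4 of the livelock proof) Along the route generated by R1 from any source s toward any destination d, the horizontal distances are monotone: for every step from v to w one has |w_x − d_x| ≤ |v_x − d_x| and |w_y − d_y| ≤ |v_y − d_y|; in particular, once the route reaches a router with x-coordinate equal to d_x it never leaves that column, so the route never takes both an east step and a west step, and likewise never takes both a north step and a south step. -/
/-! Every `R1` step changes the `x`- and `y`-coordinates by at most one unit each, and only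
toward the corresponding coordinate of the destination. Hence neither coordinate can cross its
target: an increment happens strictly below the target, a decrement strictly above it, and the
side of the target on which a coordinate lies never changes. -/

def StepToward (c a b : ℕ) : Prop :=
  b = a ∨ (a < c ∧ b = a + 1) ∨ (c < a ∧ b + 1 = a)

namespace StepToward

variable {c a b : ℕ}

theorem refl (c a : ℕ) : StepToward c a a := Or.inl rfl

theorem abs_sub_le (h : StepToward c a b) : |(b : ℤ) - c| ≤ |(a : ℤ) - c| := by
  unfold StepToward at h
  rcases abs_cases ((a : ℤ) - c) with ⟨ha, ha'⟩ | ⟨ha, ha'⟩ <;>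
    rcases abs_cases ((b : ℤ) - c) with ⟨hb, hb'⟩ | ⟨hb, hb'⟩ <;> omega

theorem le_of_le (h : StepToward c a b) (ha : a ≤ c) : b ≤ c := by
  unfold StepToward at h; omega

theorem ge_of_ge (h : StepToward c a b) (ha : c ≤ a) : c ≤ b := by
  unfold StepToward at h; omega

end StepToward

section StepTowardSeq

variable {c : ℕ} {u : ℕ → ℕ}

theorem le_of_stepToward (hu : ∀ i, StepToward c (u i) (u (i + 1))) {i j : ℕ} (hij : i ≤ j)
    (hi : u i ≤ c) : u j ≤ c :=
  Nat.le_induction hi (fun k _ hk => (hu k).le_of_le hk) j hij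

theorem ge_of_stepToward (hu : ∀ i, StepToward c (u i) (u (i + 1))) {i j : ℕ} (hij : i ≤ j)
    (hi : c ≤ u i) : c ≤ u j :=
  Nat.le_induction hi (fun k _ hk => (hu k).ge_of_ge hk) j hij

theorem eq_of_stepToward (hu : ∀ i, StepToward c (u i) (u (i + 1))) {i j : ℕ} (hij : i ≤ j)
    (hi : u i = c) : u j = c :=
  le_antisymm (le_of_stepToward hu hij hi.le) (ge_of_stepToward hu hij hi.ge)

theorem not_succ_and_pred_of_stepToward (hu : ∀ i, StepToward c (u i) (u (i + 1))) :
    ¬((∃ i, u (i + 1) = u i + 1) ∧ ∃ j, u (j + 1) + 1 = u j) := by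
  rintro ⟨⟨i, hi⟩, ⟨j, hj⟩⟩
  have below : u i < c := by have := hu i; unfold StepToward at this; omega
  have above : c < u j := by have := hu j; unfold StepToward at this; omega
  rcases Nat.lt_or_ge i j with hij | hji
  · have := le_of_stepToward hu hij ((hu i).le_of_le below.le); omega
  · have := ge_of_stepToward hu hji above.le; omega

end StepTowardSeq

theorem stepToward_of_mem_R1 {v w d : Vtx} (h : (v, w) ∈ R1 v d) :
    StepToward d.1 v.1 w.1 ∧ StepToward d.2.1 v.2.1 w.2.1 := by
  obtain ⟨-, hcase⟩ := h
  unfold StepToward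
  rcases hcase with ⟨hx, hy, -, hw⟩ | ⟨hx, -, hw⟩ | ⟨hx, hy, -, hw⟩ | ⟨hx, -, hw⟩ |
      ⟨-, -, -, hw⟩ | ⟨-, hw⟩ <;>
    simp only [northN, eastN, southN, westN, upN, downN, Prod.ext_iff] at hw <;> omega

theorem R1_route_stepToward {d : Vtx} {p : ℕ → Vtx}
    (hstep : ∀ i, p i ≠ d → (p i, p (i + 1)) ∈ R1 (p i) d)
    (hstay : ∀ i, p i = d → p (i + 1) = p i) (i : ℕ) :
    StepToward d.1 (p i).1 (p (i + 1)).1 ∧ StepToward d.2.1 (p i).2.1 (p (i + 1)).2.1 := by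
  by_cases h : p i = d
  · rw [hstay i h]
    exact ⟨.refl _ _, .refl _ _⟩
  · exact stepToward_of_mem_R1 (hstep i h)

theorem R1_route_monotone_general (d : Vtx) (p : ℕ → Vtx)
    (hstep : ∀ i, p i ≠ d → (p i, p (i + 1)) ∈ R1 (p i) d)
    (hstay : ∀ i, p i = d → p (i + 1) = p i) :
    (∀ i, |((p (i + 1)).1 : ℤ) - (d.1 : ℤ)| ≤ |((p i).1 : ℤ) - (d.1 : ℤ)| ∧
          |((p (i + 1)).2.1 : ℤ) - (d.2.1 : ℤ)| ≤ |((p i).2.1 : ℤ) - (d.2.1 : ℤ)|) ∧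
    (∀ i j, i ≤ j → (p i).1 = d.1 → (p j).1 = d.1) ∧
    ¬((∃ i, (p (i + 1)).1 = (p i).1 + 1) ∧ (∃ j, (p (j + 1)).1 + 1 = (p j).1)) ∧
    ¬((∃ i, (p (i + 1)).2.1 + 1 = (p i).2.1) ∧ (∃ j, (p (j + 1)).2.1 = (p j).2.1 + 1)) := by
  have hx i := (R1_route_stepToward hstep hstay i).1
  have hy i := (R1_route_stepToward hstep hstay i).2
  refine ⟨fun i => ⟨(hx i).abs_sub_le, (hy i).abs_sub_le⟩,
    fun i j hij hi => eq_of_stepToward hx hij hi,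
    not_succ_and_pred_of_stepToward hx, ?_⟩
  rw [and_comm]
  exact not_succ_and_pred_of_stepToward hy

/-- Monotonicity along `R1` routes (Cases 3 and 4 of the livelock proof): the
horizontal distances to the destination never increase along a route; once the route
reaches the destination column it never leaves it; and a route never takes both an
east step and a west step, nor both a north step and a south step. -/
theorem R1_route_monotone (L : ℕ) (m n : ℕ → ℕ) (hL : 2 ≤ L)
    (hm2 : ∀ z, 1 ≤ z → z ≤ L → 2 ≤ m z)
    (hn2 : ∀ z, 1 ≤ z → z ≤ L → 2 ≤ n z)
    (hmMono : ∀ z, 1 ≤ z → z < L → m z ≤ m (z + 1))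
    (hnMono : ∀ z, 1 ≤ z → z < L → n z ≤ n (z + 1))
    (s d : Vtx) (hs : memV L m n s) (hd : memV L m n d)
    (p : ℕ → Vtx) (hp0 : p 0 = s)
    (hstep : ∀ i, p i ≠ d → (p i, p (i + 1)) ∈ R1 (p i) d)
    (hstay : ∀ i, p i = d → p (i + 1) = p i) :
    (∀ i, |((p (i + 1)).1 : ℤ) - (d.1 : ℤ)| ≤ |((p i).1 : ℤ) - (d.1 : ℤ)| ∧
          |((p (i + 1)).2.1 : ℤ) - (d.2.1 : ℤ)| ≤ |((p i).2.1 : ℤ) - (d.2.1 : ℤ)|) ∧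
    (∀ i j, i ≤ j → (p i).1 = d.1 → (p j).1 = d.1) ∧
    ¬((∃ i, (p (i + 1)).1 = (p i).1 + 1) ∧ (∃ j, (p (j + 1)).1 + 1 = (p j).1)) ∧
    ¬((∃ i, (p (i + 1)).2.1 + 1 = (p i).2.1) ∧ (∃ j, (p (j + 1)).2.1 = (p j).2.1 + 1)) :=
  R1_route_monotone_general d p hstep hstay
end
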